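/- arXiv:1103.2312 — 7 statements merged into one kernel-verified Lean document; each statement's English description precedes it below -/
import Mathlib

section
/- Let E be a countable Borel equivalence relation on a standard Borel space X. If E is hyper-hyperfinite and Borel bounded, then E is hyperfinite. -/
open Filter

/-- Eventual equality on `ℕ → ℕ`. -/
def EvEq (α β : ℕ → ℕ) : Prop := ∀ᶠ n in Filter.atTop, α n = β n

/-- Eventual domination on `ℕ → ℕ`. -/
def EvLe (α β : ℕ → ℕ) : Prop := ∀ᶠ n in Filter.atTop, α n ≤ β n

/-- A finite Borel equivalence relation: a Borel equivalence relation all of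
whose classes are finite. -/
def FiniteBorelER {X : Type*} [MeasurableSpace X] (F : X → X → Prop) : Prop :=
  Equivalence F ∧ MeasurableSet {p : X × X | F p.1 p.2} ∧ ∀ x, {y | F x y}.Finite

/-- `E` is hyperfinite: an increasing union of finite Borel equivalence relations. -/
def Hyperfinite {X : Type*} [MeasurableSpace X] (E : X → X → Prop) : Prop :=
  ∃ F : ℕ → X → X → Prop, (∀ n, FiniteBorelER (F n)) ∧
    (∀ n x y, F n x y → F (n + 1) x y) ∧ (∀ x y, E x y ↔ ∃ n, F n x y)

/-- `E` is hyper-hyperfinite: an increasing union of hyperfinite Borel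
equivalence relations. -/
def HyperHyperfinite {X : Type*} [MeasurableSpace X] (E : X → X → Prop) : Prop :=
  ∃ G : ℕ → X → X → Prop, (∀ n, Hyperfinite (G n)) ∧
    (∀ n x y, G n x y → G (n + 1) x y) ∧ (∀ x y, E x y ↔ ∃ n, G n x y)

/-- `E` is Borel bounded: every Borel `φ : X → ℕ^ℕ` is eventually dominated by a
Borel homomorphism `ψ` from `E` to `=*`. -/
def BorelBounded {X : Type*} [MeasurableSpace X] (E : X → X → Prop) : Prop :=
  ∀ φ : X → ℕ → ℕ, Measurable φ →
    ∃ ψ : X → ℕ → ℕ, Measurable ψ ∧ (∀ x y, E x y → EvEq (ψ x) (ψ y)) ∧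
      ∀ x, EvLe (φ x) (ψ x)

/-!
Write `E = ⋃ₙ Gₙ` with `Gₙ = ⋃ₘ Fₙₘ`, the `Fₙₘ` finite Borel equivalence relations increasing in
`m`. For fixed `j`, each `x` has only finitely many `y` with `x Fₙₘ y` for some `n, m ≤ j`, so a
single level `φ x j` makes all those `y` that are `Gⱼ`-related to `x` also `F_{j, φ x j}`-related;
Novikov's separation theorem makes `φ` Borel. Borel boundedness yields a homomorphism `ψ` from `E`
to `=*` with `φ ≤* ψ`, and then the finite Borel equivalence relations
`Kⱼ x y ↔ ψ x j = ψ y j ∧ F_{j, ψ x j} x y` have `E` as their lim inf, so their tails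
`⋂_{j ≥ N} Kⱼ` exhibit `E` as hyperfinite.
-/

open Set Function PiNat

section Separation

variable {α : Type*} [MeasurableSpace α]

def MeasurablySeparableSeq (A : ℕ → Set α) : Prop :=
  ∃ B : ℕ → Set α, (∀ n, A n ⊆ B n) ∧ (∀ n, MeasurableSet (B n)) ∧ ⋂ n, B n = ∅

theorem measurablySeparableSeq_of_disjoint {A : ℕ → Set α} {a b : ℕ} {U V : Set α}
    (hU : MeasurableSet U) (hV : MeasurableSet V) (hUV : Disjoint U V)
    (ha : A a ⊆ U) (hb : A b ⊆ V) : MeasurablySeparableSeq A := by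
  classical
  refine ⟨fun n => (if n = a then U else univ) ∩ (if n = b then V else univ), fun n => ?_,
    fun n => ?_, eq_empty_of_forall_notMem fun x hx => ?_⟩
  · refine subset_inter ?_ ?_ <;> split_ifs with h <;> (try subst h) <;> simp [*]
  · exact MeasurableSet.inter (by split_ifs <;> simp [*]) (by split_ifs <;> simp [*])
  · have hxa := mem_iInter.1 hx a
    have hxb := mem_iInter.1 hx b
    simp only [mem_inter_iff] at hxa hxb
    exact disjoint_left.1 hUV hxa.1 hxb.2

theorem MeasurablySeparableSeq.of_update {A : ℕ → Set α} {n : ℕ} {T : ℕ → Set α}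
    (hA : A n ⊆ ⋃ i, T i) (hT : ∀ i, MeasurablySeparableSeq (update A n (T i))) :
    MeasurablySeparableSeq A := by
  choose B hAB hB hBe using hT
  refine ⟨update (fun m => ⋂ i, B i m) n (⋃ i, B i n), fun m => ?_, fun m => ?_,
    eq_empty_of_forall_notMem fun x hx => ?_⟩
  · rcases eq_or_ne m n with rfl | hm
    · simpa using hA.trans (iUnion_mono fun i => by simpa using hAB i m)
    · simpa [hm] using fun i => by simpa [hm] using hAB i m
  · rcases eq_or_ne m n with rfl | hm
    · simpa using MeasurableSet.iUnion fun i => hB i m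
    · simpa [hm] using MeasurableSet.iInter fun i => hB i m
  · obtain ⟨i, hi⟩ := mem_iUnion.1 (by simpa using mem_iInter.1 hx n)
    have : x ∈ ⋂ m, B i m := mem_iInter.2 fun m => by
      rcases eq_or_ne m n with rfl | hm
      · exact hi
      · exact (by simpa [hm] using mem_iInter.1 hx m : ∀ i, x ∈ B i m) i
    simp [hBe i] at this

end Separation

section Cylinders

theorem exists_mem_cylinder_of_nested {E : ℕ → Type*} {x : ℕ → ∀ i, E i} {l : ℕ → ℕ}
    (hl : Monotone l) (hl' : Tendsto l atTop atTop)
    (hx : ∀ k, x (k + 1) ∈ cylinder (x k) (l k)) : ∃ z, ∀ k, z ∈ cylinder (x k) (l k) := by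
  have nested : ∀ k k', k ≤ k' → x k' ∈ cylinder (x k) (l k) := by
    intro k k' hk
    induction k', hk using Nat.le_induction with
    | base => exact self_mem_cylinder _ _
    | succ k' hk ih =>
      rw [← mem_cylinder_iff_eq.1 ih]
      exact cylinder_anti _ (hl hk) (hx k')
  choose K hK using fun i => (hl'.eventually_gt_atTop i).exists
  refine ⟨fun i => x (K i) i, fun k => mem_cylinder_iff.2 fun i hi => ?_⟩
  have h₁ := mem_cylinder_iff.1 (nested (K i) (max k (K i)) (le_max_right _ _)) i (hK i)
  have h₂ := mem_cylinder_iff.1 (nested k (max k (K i)) (le_max_left _ _)) i hi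
  exact h₁.symm.trans h₂

theorem exists_refining_seq {P : (ℕ → ℕ → ℕ) → (ℕ → ℕ) → Prop}
    (hP : ∀ x l, P x l → ∀ n, ∃ y ∈ cylinder (x n) (l n),
      P (update x n y) (update l n (l n + 1)))
    {x₀ : ℕ → ℕ → ℕ} {l₀ : ℕ → ℕ} (h₀ : P x₀ l₀) :
    ∃ (x : ℕ → ℕ → ℕ → ℕ) (l : ℕ → ℕ → ℕ), (∀ k, P (x k) (l k)) ∧
      (∀ k n, x (k + 1) n ∈ cylinder (x k n) (l k n)) ∧
      (∀ n, Monotone (l · n)) ∧ ∀ n, Tendsto (l · n) atTop atTop := by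
  choose y hy hPy using hP
  -- Stage `k` refines coordinate `k.unpair.1`, so every coordinate is refined infinitely often.
  let s : ℕ → {c : (ℕ → ℕ → ℕ) × (ℕ → ℕ) // P c.1 c.2} := fun k =>
    Nat.rec ⟨(x₀, l₀), h₀⟩ (fun k c => ⟨(update c.1.1 k.unpair.1 (y _ _ c.2 k.unpair.1),
      update c.1.2 k.unpair.1 (c.1.2 k.unpair.1 + 1)), hPy _ _ c.2 k.unpair.1⟩) k
  have hl : ∀ k n, (s (k + 1)).1.2 n = if n = k.unpair.1 then (s k).1.2 n + 1 else (s k).1.2 n := by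
    intro k n
    rcases eq_or_ne n k.unpair.1 with rfl | hn <;> simp [s, *]
  have hmono : ∀ n, Monotone fun k => (s k).1.2 n := fun n =>
    monotone_nat_of_le_succ fun k => by rw [hl]; split_ifs <;> omega
  refine ⟨fun k => (s k).1.1, fun k => (s k).1.2, fun k => (s k).2, fun k n => ?_, hmono,
    fun n => tendsto_atTop_atTop_of_monotone (hmono n) fun b => ?_⟩
  · rcases eq_or_ne n k.unpair.1 with rfl | hn
    · simp [s, hy]
    · simp [s, hn]
  · induction b with
    | zero => exact ⟨0, Nat.zero_le _⟩
    | succ b ih =>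
      obtain ⟨k, hk⟩ := ih
      refine ⟨Nat.pair n k + 1, ?_⟩
      have := hmono n (Nat.right_le_pair n k)
      simp only at hk this ⊢
      rw [hl, Nat.unpair_pair, if_pos rfl]
      omega

theorem exists_branch_of_refining {P : (ℕ → ℕ → ℕ) → (ℕ → ℕ) → Prop}
    (hP : ∀ x l, P x l → ∀ n, ∃ y ∈ cylinder (x n) (l n),
      P (update x n y) (update l n (l n + 1)))
    (hPcyl : ∀ x x' l, (∀ n, x' n ∈ cylinder (x n) (l n)) → P x l → P x' l)
    {x₀ : ℕ → ℕ → ℕ} {l₀ : ℕ → ℕ} (h₀ : P x₀ l₀) :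
    ∃ (z : ℕ → ℕ → ℕ) (l : ℕ → ℕ → ℕ), (∀ k, P z (l k)) ∧
      ∀ n, Tendsto (l · n) atTop atTop := by
  obtain ⟨x, l, hPx, hx, hmono, htends⟩ := exists_refining_seq hP h₀
  choose z hz using fun n =>
    exists_mem_cylinder_of_nested (x := (x · n)) (hmono n) (htends n) (hx · n)
  exact ⟨z, l, fun k => hPcyl _ _ _ (hz · k) (hPx k), htends⟩

end Cylinders

section Novikov

variable {α : Type*} [MeasurableSpace α]

theorem exists_mem_cylinder_not_measurablySeparableSeq {f : ℕ → (ℕ → ℕ) → α}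
    {x : ℕ → ℕ → ℕ} {l : ℕ → ℕ}
    (h : ¬MeasurablySeparableSeq fun n => f n '' cylinder (x n) (l n)) (n : ℕ) :
    ∃ y ∈ cylinder (x n) (l n), ¬MeasurablySeparableSeq fun m =>
      f m '' cylinder (update x n y m) (update l n (l n + 1) m) := by
  by_contra! H
  refine h (MeasurablySeparableSeq.of_update (n := n)
    (T := fun i => f n '' cylinder (update (x n) (l n) i) (l n + 1)) ?_ fun i => ?_)
  · rw [← image_iUnion, iUnion_cylinder_update (x n) (l n)]
  · convert H _ (update_mem_cylinder _ _ i) using 1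
    funext m
    rcases eq_or_ne m n with rfl | hm <;> simp [*]

variable [TopologicalSpace α] [T2Space α] [OpensMeasurableSpace α]

theorem eq_of_forall_not_measurablySeparableSeq {f : ℕ → (ℕ → ℕ) → α}
    (hf : ∀ n, Continuous (f n)) {z : ℕ → ℕ → ℕ} {l : ℕ → ℕ → ℕ}
    (hl : ∀ n, Tendsto (l · n) atTop atTop)
    (h : ∀ k, ¬MeasurablySeparableSeq fun n => f n '' cylinder (z n) (l k n)) (a b : ℕ) :
    f a (z a) = f b (z b) := by
  by_contra hab
  obtain ⟨U, V, hU, hV, haU, hbV, hUV⟩ := t2_separation hab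
  have small : ∀ {c W}, IsOpen W → f c (z c) ∈ W →
      ∀ᶠ k in atTop, f c '' cylinder (z c) (l k c) ⊆ W := by
    intro c W hW hcW
    obtain ⟨_, ⟨y, M, rfl⟩, hzy, hyW⟩ := (isTopologicalBasis_cylinders _).exists_subset_of_mem_open
      (mem_preimage.2 hcW) (hW.preimage (hf c))
    rw [← mem_cylinder_iff_eq.1 hzy] at hyW
    filter_upwards [(hl c).eventually_ge_atTop M] with k hk
    exact image_subset_iff.2 ((cylinder_anti _ hk).trans hyW)
  obtain ⟨k, hkU, hkV⟩ := ((small hU haU).and (small hV hbV)).exists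
  exact h k (measurablySeparableSeq_of_disjoint hU.measurableSet hV.measurableSet hUV hkU hkV)

/-- **Novikov's separation theorem**. -/
theorem measurablySeparableSeq_of_analyticSet {A : ℕ → Set α}
    (hA : ∀ n, MeasureTheory.AnalyticSet (A n)) (hAe : ⋂ n, A n = ∅) :
    MeasurablySeparableSeq A := by
  by_cases hne : ∃ n, A n = ∅
  · obtain ⟨n, hn⟩ := hne
    exact measurablySeparableSeq_of_disjoint (a := n) (b := n) .empty .empty
      (disjoint_empty _) hn.le hn.le
  simp only [not_exists] at hne
  have hrange : ∀ n, ∃ f : (ℕ → ℕ) → α, Continuous f ∧ range f = A n := fun n => by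
    have h := hA n
    rw [MeasureTheory.AnalyticSet] at h
    exact h.resolve_left (hne n)
  choose f hf hfA using hrange
  by_contra hsep
  obtain ⟨z, l, hzl, hl⟩ := exists_branch_of_refining
    (P := fun x l => ¬MeasurablySeparableSeq fun n => f n '' cylinder (x n) (l n))
    (fun _ _ h => exists_mem_cylinder_not_measurablySeparableSeq h)
    (fun _ _ _ hx h => by simpa only [mem_cylinder_iff_eq.1 (hx _)] using h)
    (x₀ := fun _ _ => 0) (l₀ := fun _ => 0) (by simpa [cylinder_zero, hfA] using hsep)
  have hz := eq_of_forall_not_measurablySeparableSeq hf hl hzl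
  have : f 0 (z 0) ∈ ⋂ n, A n := mem_iInter.2 fun n => by
    rw [hz 0 n, ← hfA n]
    exact mem_range_self _
  simp [hAe] at this

theorem exists_measurable_notMem_of_analyticSet {A : ℕ → Set α}
    (hA : ∀ n, MeasureTheory.AnalyticSet (A n)) (hAe : ⋂ n, A n = ∅) :
    ∃ u : α → ℕ, Measurable u ∧ ∀ x, x ∉ A (u x) := by
  classical
  obtain ⟨B, hAB, hB, hBe⟩ := measurablySeparableSeq_of_analyticSet hA hAe
  have hex : ∀ x, ∃ n, x ∉ B n := fun x => by
    simpa using (hBe ▸ notMem_empty x : x ∉ ⋂ n, B n)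
  exact ⟨fun x => Nat.find (hex x), measurable_find hex fun n => (hB n).compl,
    fun x hx => Nat.find_spec (hex x) (hAB _ hx)⟩

end Novikov

section Levels

variable {X : Type*} [MeasurableSpace X]

theorem exists_measurable_level [StandardBorelSpace X] {Y : Type*} [MeasurableSpace Y]
    [StandardBorelSpace Y] {R : X → Y → Prop} {H : ℕ → X → Y → Prop}
    (hR : MeasurableSet {p : X × Y | R p.1 p.2}) (hRfin : ∀ x, {y | R x y}.Finite)
    (hH : ∀ M, MeasurableSet {p : X × Y | H M p.1 p.2}) (hHmono : Monotone H)
    (hRH : ∀ x y, R x y → ∃ M, H M x y) :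
    ∃ u : X → ℕ, Measurable u ∧ ∀ x y, R x y → H (u x) x y := by
  let := upgradeStandardBorel X
  let S : ℕ → Set (X × Y) := fun M => {p | R p.1 p.2 ∧ ¬H M p.1 p.2}
  have hS : ∀ M, MeasureTheory.AnalyticSet (Prod.fst '' S M) := fun M =>
    (hR.inter (hH M).compl).analyticSet_image measurable_fst
  have hSe : ⋂ M, Prod.fst '' S M = ∅ := by
    refine eq_empty_of_forall_notMem fun x hx => ?_
    have hev : ∀ᶠ M in atTop, ∀ y ∈ {y | R x y}, H M x y :=
      (eventually_all_finite (hRfin x)).2 fun y hy =>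
        let ⟨M, hM⟩ := hRH x y hy
        eventually_atTop.2 ⟨M, fun _ h => hHmono h x y hM⟩
    obtain ⟨M, hM⟩ := hev.exists
    obtain ⟨⟨_, y⟩, ⟨hy, hMy⟩, rfl⟩ := mem_iInter.1 hx M
    exact hMy (hM y hy)
  obtain ⟨u, hu, hxu⟩ := exists_measurable_notMem_of_analyticSet hS hSe
  exact ⟨u, hu, fun x y hxy => by_contra fun h => hxu x ⟨(x, y), ⟨hxy, h⟩, rfl⟩⟩

theorem exists_measurable_eventually_level [StandardBorelSpace X]
    {G : ℕ → X → X → Prop} {F : ℕ → ℕ → X → X → Prop}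
    (hF : ∀ j M, FiniteBorelER (F j M)) (hFmono : ∀ j, Monotone (F j)) (hGmono : Monotone G)
    (hFG : ∀ j x y, G j x y ↔ ∃ M, F j M x y) :
    ∃ φ : X → ℕ → ℕ, Measurable φ ∧ ∀ n x y, G n x y → ∀ᶠ j in atTop, F j (φ x j) x y := by
  have hFmeas : ∀ j M, Measurable fun p : X × X => F j M p.1 p.2 := fun j M =>
    measurableSet_setOfPred.1 (hF j M).2.1
  have hGmeas : ∀ j, Measurable fun p : X × X => G j p.1 p.2 := fun j => by
    simp_rw [hFG]
    fun_prop (disch := exact hFmeas _ _)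
  have hlevel : ∀ j, ∃ u : X → ℕ, Measurable u ∧
      ∀ x y, (∃ n ≤ j, ∃ m ≤ j, F n m x y) ∧ G j x y → F j (u x) x y := fun j =>
    exists_measurable_level (measurableSet_setOfPred.2 (by fun_prop (disch := assumption)))
      (fun x => ((finite_le_nat j).biUnion fun n _ => (finite_le_nat j).biUnion fun m _ =>
        (hF n m).2.2 x).subset fun y ⟨⟨n, hn, m, hm, h⟩, _⟩ => mem_biUnion hn (mem_biUnion hm h))
      (fun M => (hF j M).2.1) (hFmono j) fun x y h => (hFG j x y).1 h.2
  choose u hu huF using hlevel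
  refine ⟨fun x j => u j x, measurable_pi_lambda _ hu, fun n x y hn => ?_⟩
  obtain ⟨m, hm⟩ := (hFG n x y).1 hn
  filter_upwards [eventually_ge_atTop (max n m)] with j hj
  exact huF j x y ⟨⟨n, le_of_max_le_left hj, m, le_of_max_le_right hj, hm⟩,
    hGmono (le_of_max_le_left hj) x y hn⟩

end Levels

section FiniteBorelER

variable {X : Type*} [MeasurableSpace X]

theorem finiteBorelER_select {F : ℕ → X → X → Prop} (hF : ∀ M, FiniteBorelER (F M))
    {c : X → ℕ} (hc : Measurable c) : FiniteBorelER fun x y => c x = c y ∧ F (c x) x y := by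
  refine ⟨⟨fun x => ⟨rfl, (hF _).1.refl x⟩, fun ⟨hxy, h⟩ => ⟨hxy.symm, hxy ▸ (hF _).1.symm h⟩,
    fun ⟨hxy, h⟩ ⟨hyz, h'⟩ => ⟨hxy.trans hyz, (hF _).1.trans h (hxy ▸ h')⟩⟩, ?_,
    fun x => (hF (c x)).2.2 x |>.subset fun _ h => h.2⟩
  have hFmeas : ∀ M, Measurable fun p : X × X => F M p.1 p.2 := fun M =>
    measurableSet_setOfPred.1 (hF M).2.1
  have : {p : X × X | c p.1 = c p.2 ∧ F (c p.1) p.1 p.2} =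
      {p | c p.1 = c p.2 ∧ ∃ M, c p.1 = M ∧ F M p.1 p.2} := by
    ext p
    simp
  rw [this]
  exact measurableSet_setOfPred.2 (by fun_prop (disch := assumption))

theorem finiteBorelER_forall_ge {K : ℕ → X → X → Prop} (hK : ∀ j, FiniteBorelER (K j))
    (N : ℕ) : FiniteBorelER fun x y => ∀ j ≥ N, K j x y :=
  ⟨⟨fun x j _ => (hK j).1.refl x, fun h j hj => (hK j).1.symm (h j hj),
    fun h h' j hj => (hK j).1.trans (h j hj) (h' j hj)⟩,
    measurableSet_setOfPred.2 (Measurable.forall fun j => Measurable.forall fun _ =>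
      measurableSet_setOfPred.1 (hK j).2.1),
    fun x => (hK N).2.2 x |>.subset fun _ h => h N le_rfl⟩

theorem hyperfinite_of_forall_eventually {E : X → X → Prop} {K : ℕ → X → X → Prop}
    (hK : ∀ j, FiniteBorelER (K j)) (hE : ∀ x y, E x y ↔ ∀ᶠ j in atTop, K j x y) :
    Hyperfinite E :=
  ⟨fun N x y => ∀ j ≥ N, K j x y, finiteBorelER_forall_ge hK,
    fun _ _ _ h j hj => h j (Nat.le_of_succ_le hj), fun x y => (hE x y).trans eventually_atTop⟩

end FiniteBorelER

theorem hyperfinite_of_hyperHyperfinite_of_borelBounded_general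
    {X : Type*} [MeasurableSpace X] [StandardBorelSpace X]
    (E : X → X → Prop)
    (hhh : HyperHyperfinite E) (hbb : BorelBounded E) :
    Hyperfinite E := by
  obtain ⟨G, hG, hGsucc, hEG⟩ := hhh
  choose F hF hFsucc hFG using hG
  have hFmono : ∀ j, Monotone (F j) := fun j => monotone_nat_of_le_succ (hFsucc j)
  obtain ⟨φ, hφ, hφF⟩ := exists_measurable_eventually_level hF hFmono
    (monotone_nat_of_le_succ hGsucc) hFG
  obtain ⟨ψ, hψ, hψE, hφψ⟩ := hbb φ hφ
  refine hyperfinite_of_forall_eventually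
    (fun j => finiteBorelER_select (hF j) ((measurable_pi_apply j).comp hψ)) fun x y => ⟨?_, ?_⟩
  · intro hxy
    obtain ⟨n, hn⟩ := (hEG x y).1 hxy
    filter_upwards [hψE x y hxy, hφψ x, hφF n x y hn] with j hψj hφψj hφj
    exact ⟨hψj, hFmono j hφψj x y hφj⟩
  · intro h
    obtain ⟨j, -, hj⟩ := h.exists
    exact (hEG x y).2 ⟨j, (hFG j x y).2 ⟨_, hj⟩⟩

/-- If a countable Borel equivalence relation `E` on a standard Borel space is
hyper-hyperfinite and Borel bounded, then `E` is hyperfinite. -/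
theorem hyperfinite_of_hyperHyperfinite_of_borelBounded
    {X : Type*} [MeasurableSpace X] [StandardBorelSpace X]
    (E : X → X → Prop) (hEq : Equivalence E)
    (hBorel : MeasurableSet {p : X × X | E p.1 p.2})
    (hCtble : ∀ x, {y | E x y}.Countable)
    (hhh : HyperHyperfinite E) (hbb : BorelBounded E) :
    Hyperfinite E :=
  hyperfinite_of_hyperHyperfinite_of_borelBounded_general E hhh hbb
end

section
/- The relation E_0 of eventual equality on 2^ℕ is not invariantly Borel bounded: there exists a Borel function φ : 2^ℕ → ℕ^ℕ (for instance, φ(x) = the increasing enumeration of x when x ⊆ ℕ is infinite, and the constant zero function otherwise) such that there is no E_0-invariant Borel function ψ : 2^ℕ → ℕ^ℕ with φ(x) ≤* ψ(x) for all x ∈ 2^ℕ. -/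
/-!
Let `φ x n` be the first index `≥ n` at which `x` is `true`. Finite flips of coordinates act on
`2^ℕ` by homeomorphisms preserving `E₀`-classes, and they act topologically transitively, so an
`E₀`-invariant Baire measurable set is meagre or comeagre. Hence every `E₀`-invariant Borel
`ψ : 2^ℕ → ℕ^ℕ` agrees with a single `β : ℕ → ℕ` on a comeagre set. But a generic `x` has, beyond
every `N`, some `n` followed by a block of `false`s of length `β n + 1`, so `β n < φ x n` for
infinitely many `n`, and `φ x ≤* ψ x = β` fails.
-/

open Filter

/-- Eventual equality (`E₀`) on `2^ℕ`. -/
def E0 (x y : ℕ → Bool) : Prop := ∀ᶠ n in Filter.atTop, x n = y n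

open Set Topology

section ZeroOneLaw

variable {X ι : Type*} [TopologicalSpace X] [BaireSpace X] {g : ι → X ≃ₜ X}

theorem isMeagre_or_mem_residual_of_preimage_eq
    (htrans : ∀ U V : Set X, IsOpen U → IsOpen V → U.Nonempty → V.Nonempty →
      ∃ i, (g i ⁻¹' U ∩ V).Nonempty)
    {A : Set X} (hA : BaireMeasurableSet A) (hinv : ∀ i, g i ⁻¹' A = A) :
    IsMeagre A ∨ A ∈ residual X := by
  by_contra! h
  obtain ⟨U, hU, hAU⟩ := hA.residualEq_isOpen
  obtain ⟨V, hV, hAV⟩ := hA.compl.residualEq_isOpen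
  have hUne : U.Nonempty := nonempty_iff_ne_empty.2 fun hU₀ =>
    h.1 (eventuallyEq_empty.1 (hU₀ ▸ hAU))
  have hVne : V.Nonempty := nonempty_iff_ne_empty.2 fun hV₀ =>
    h.2 ((eventuallyEq_empty.1 (hV₀ ▸ hAV)).mono fun _ => not_not.1)
  obtain ⟨i, hi⟩ := htrans U V hU hV hUne hVne
  refine not_isMeagre_of_isOpen ((hU.preimage (g i).continuous).inter hV) hi ?_
  have hAU' : A =ᶠ[residual X] g i ⁻¹' U := hinv i ▸
    hAU.filter_mono (tendsto_residual_of_isOpenMap (g i).continuous (g i).isOpenMap)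
  have hempty : (g i ⁻¹' U ∩ V : Set X) =ᶠ[residual X] (∅ : Set X) := by
    simpa only [inter_compl_self] using hAU'.symm.inter hAV.symm
  exact eventuallyEq_empty.1 hempty

theorem exists_eventually_residual_eq_of_comp_eq [Nonempty X] [MeasurableSpace X] [BorelSpace X]
    (htrans : ∀ U V : Set X, IsOpen U → IsOpen V → U.Nonempty → V.Nonempty →
      ∃ i, (g i ⁻¹' U ∩ V).Nonempty)
    {α : Type*} [Countable α] [MeasurableSpace α] [MeasurableSingletonClass α] {f : X → α}
    (hf : Measurable f) (hinv : ∀ i, f ∘ g i = f) : ∃ a, ∀ᶠ x in residual X, f x = a := by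
  by_contra h
  have hmeagre (a : α) : IsMeagre (f ⁻¹' {a}) :=
    (isMeagre_or_mem_residual_of_preimage_eq htrans
      (hf (measurableSet_singleton a)).baireMeasurableSet
      fun i => by rw [← preimage_comp, hinv]).resolve_right fun ha => h ⟨a, ha⟩
  refine not_isMeagre_of_isOpen isOpen_univ (univ_nonempty (α := X)) ?_
  exact (isMeagre_iUnion hmeagre).mono fun x _ => mem_iUnion.2 ⟨f x, rfl⟩

end ZeroOneLaw

theorem exists_forall_lt_eq_mem_of_isOpen {α : Type*} [TopologicalSpace α] {U : Set (ℕ → α)}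
    (hU : IsOpen U) {x : ℕ → α} (hx : x ∈ U) : ∃ n, ∀ y, (∀ j < n, y j = x j) → y ∈ U := by
  obtain ⟨I, u, hu, hIU⟩ := isOpen_pi_iff.1 hU x hx
  obtain ⟨n, hIn⟩ := I.exists_nat_subset_range
  refine ⟨n, fun y hy => hIU fun i hi => ?_⟩
  rw [hy i (Finset.mem_range.1 (hIn hi))]
  exact (hu i hi).2

def flipOn (s : Finset ℕ) : (ℕ → Bool) ≃ₜ (ℕ → Bool) where
  toFun x n := xor (x n) (decide (n ∈ s))
  invFun x n := xor (x n) (decide (n ∈ s))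
  left_inv x := by funext n; simp
  right_inv x := by funext n; simp
  continuous_toFun := by fun_prop
  continuous_invFun := by fun_prop

theorem e0_flipOn (s : Finset ℕ) (x : ℕ → Bool) : E0 x (flipOn s x) := by
  refine (Nat.cofinite_eq_atTop ▸ s.eventually_cofinite_notMem).mono fun n hn => ?_
  simp [flipOn, hn]

theorem exists_flipOn_preimage_inter_nonempty {U V : Set (ℕ → Bool)} (hU : IsOpen U)
    (hUne : U.Nonempty) (hVne : V.Nonempty) : ∃ s, (flipOn s ⁻¹' U ∩ V).Nonempty := by
  obtain ⟨x, hx⟩ := hUne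
  obtain ⟨y, hy⟩ := hVne
  obtain ⟨n, hn⟩ := exists_forall_lt_eq_mem_of_isOpen hU hx
  refine ⟨(Finset.range n).filter fun j => x j ≠ y j, y, hn _ fun j hj => ?_, hy⟩
  cases hxj : x j <;> cases hyj : y j <;> simp [flipOn, hj, hxj, hyj]

theorem exists_eventually_residual_eq_of_e0_invariant {ι α : Type*} [Countable ι] [Countable α]
    [MeasurableSpace α] [MeasurableSingletonClass α] {f : (ℕ → Bool) → ι → α}
    (hf : Measurable f) (hinv : ∀ x y, E0 x y → f x = f y) :
    ∃ a, ∀ᶠ x in residual (ℕ → Bool), f x = a := by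
  have hcoord (i : ι) : ∃ a, ∀ᶠ x in residual (ℕ → Bool), f x i = a :=
    exists_eventually_residual_eq_of_comp_eq
      (fun _ _ hU _ hUne hVne => exists_flipOn_preimage_inter_nonempty hU hUne hVne)
      (measurable_pi_iff.1 hf i)
      fun s => funext fun x => congrFun (hinv _ _ (e0_flipOn s x)).symm i
  choose a ha using hcoord
  exact ⟨a, (eventually_countable_forall.2 ha).mono fun _ => funext⟩

theorem exists_apply_add_eq_true_or_forall (x : ℕ → Bool) (n : ℕ) :
    ∃ k, x (n + k) = true ∨ ∀ j, x (n + j) = false :=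
  (em (∀ j, x (n + j) = false)).elim (fun h => ⟨0, .inr h⟩)
    fun h => (not_forall.1 h).imp fun _ hk => .inl (by simpa using hk)

/-- The first index `≥ n` at which `x` is `true`; junk value `n` if there is none. -/
noncomputable def nextTrue (x : ℕ → Bool) (n : ℕ) : ℕ :=
  open Classical in n + Nat.find (exists_apply_add_eq_true_or_forall x n)

theorem measurable_nextTrue : Measurable nextTrue := by
  classical
  refine measurable_pi_iff.2 fun n => (measurable_find _ fun k => ?_).const_add n
  have hcoord (m : ℕ) (b : Bool) : Measurable fun x : ℕ → Bool => x m = b :=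
    measurableSet_setOfPred.1 ((measurableSet_singleton b).preimage (measurable_pi_apply m))
  exact measurableSet_setOfPred.2 ((hcoord _ _).or (.forall fun j => hcoord _ _))

theorem nextTrue_eq {x : ℕ → Bool} {n k : ℕ} (hfalse : ∀ j < k, x (n + j) = false)
    (htrue : x (n + k) = true) : nextTrue x n = n + k := by
  classical
  rw [nextTrue, Nat.add_left_cancel_iff, Nat.find_eq_iff]
  exact ⟨.inl htrue, fun j hj h => by simp_all⟩

theorem eventually_residual_exists_lt_nextTrue (β : ℕ → ℕ) (N : ℕ) :
    ∀ᶠ x in residual (ℕ → Bool), ∃ n ≥ N, β n < nextTrue x n := by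
  set T : ℕ → Set (ℕ → Bool) := fun n =>
    {x | ∀ j < β n + 1, x (n + j) = false} ∩ {x | x (n + (β n + 1)) = true}
  have hcoord (m : ℕ) (b : Bool) : IsOpen {x : ℕ → Bool | x m = b} :=
    (isOpen_discrete {b}).preimage (continuous_apply m : Continuous fun x : ℕ → Bool => x m)
  have hTopen (n : ℕ) : IsOpen (T n) := by
    refine .inter ?_ (hcoord _ _)
    simpa only [← mem_Iio, ofPred_forall, ofPred_mem_eq] using
      (finite_Iio _).isOpen_biInter fun j _ => hcoord (n + j) false
  have hdense : Dense (⋃ n ≥ N, T n) := by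
    refine dense_iff_inter_open.2 fun U hU ⟨x, hx⟩ => ?_
    obtain ⟨m, hm⟩ := exists_forall_lt_eq_mem_of_isOpen hU hx
    set n := max N m
    refine ⟨fun j => if j < n then x j else decide (j = n + (β n + 1)),
      hm _ fun j hj => if_pos (by omega), mem_iUnion₂.2 ⟨n, le_max_left _ _, ?_, ?_⟩⟩
    · intro j hj
      simp only [add_lt_iff_neg_left, not_lt_zero, ↓reduceIte, Nat.add_left_cancel_iff,
        decide_eq_false_iff_not]
      omega
    · simp
  refine mem_of_superset (residual_of_dense_open (isOpen_biUnion fun n _ => hTopen n) hdense) ?_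
  intro x hx
  obtain ⟨n, hn, hfalse, htrue⟩ := mem_iUnion₂.1 hx
  exact ⟨n, hn, by rw [nextTrue_eq hfalse htrue]; omega⟩

/-- The relation `E₀` of eventual equality on `2^ℕ` is not invariantly Borel
bounded: there is a Borel function `φ : 2^ℕ → ℕ^ℕ` such that no `E₀`-invariant
Borel function `ψ : 2^ℕ → ℕ^ℕ` satisfies `φ(x) ≤* ψ(x)` for all `x`. -/
theorem E0_not_invariantlyBorelBounded :
    ∃ φ : (ℕ → Bool) → ℕ → ℕ, Measurable φ ∧
      ¬ ∃ ψ : (ℕ → Bool) → ℕ → ℕ, Measurable ψ ∧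
          (∀ x y, E0 x y → ψ x = ψ y) ∧ ∀ x, EvLe (φ x) (ψ x) := by
  refine ⟨nextTrue, measurable_nextTrue, ?_⟩
  rintro ⟨ψ, hψ, hinv, hdom⟩
  obtain ⟨β, hβ⟩ := exists_eventually_residual_eq_of_e0_invariant hψ hinv
  obtain ⟨x, hxβ, hx⟩ := (dense_of_mem_residual
    (hβ.and (eventually_countable_forall.2 (eventually_residual_exists_lt_nextTrue β)))).nonempty
  obtain ⟨N, hN⟩ := eventually_atTop.1 (hdom x)
  obtain ⟨n, hn, hlt⟩ := hx N
  exact (hN n hn).not_gt (hxβ ▸ hlt)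
end

section
/- Every hyperfinite Borel equivalence relation is Borel bounded: if E = ⋃_n F_n is a countable Borel equivalence relation on a standard Borel space X which is the increasing union of finite Borel equivalence relations F_n, then for every Borel function φ : X → ℕ^ℕ there exists a Borel homomorphism ψ : X → ℕ^ℕ from E to =* such that φ(x) ≤* ψ(x) for all x ∈ X. -/
/-!
Along a finite Borel equivalence relation `r`, a Borel `g : X → ℕ` is dominated by an
`r`-invariant Borel function: the saturations `s k` of `{g ≥ k}` are invariant analytic sets
with empty intersection, because classes are finite. Novikov's separation theorem encloses
them in Borel sets with empty intersection, and iterating Lusin separation against the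
saturation makes these Borel sets invariant; the first index `k` whose set misses `x` is the
bound at `x`. Applied to `F n` and `x ↦ φ x n`, this gives `ψ x n`, and `x E y` forces
`F n x y` for all large `n`.
-/

open Filter

open Set Function

section Separation

variable {α ι : Type*} [MeasurableSpace α]

def MeasurablySeparableFamily (s : ι → Set α) : Prop :=
  ∃ t : ι → Set α, (∀ i, s i ⊆ t i) ∧ (∀ i, MeasurableSet (t i)) ∧ ⋂ i, t i = ∅

theorem MeasurablySeparableFamily.of_measurablySeparable {s : ι → Set α} {i j : ι}
    (hij : i ≠ j) (h : MeasureTheory.MeasurablySeparable (s i) (s j)) :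
    MeasurablySeparableFamily s := by
  classical
  obtain ⟨u, hsu, hdisj, hu⟩ := h
  refine ⟨fun k => if k = i then u else if k = j then uᶜ else univ,
    fun k => ?_, fun k => ?_, ?_⟩
  · dsimp only
    split_ifs with hi hj
    · exact hi ▸ hsu
    · exact hj ▸ hdisj.subset_compl_right
    · exact subset_univ _
  · dsimp only
    split_ifs
    exacts [hu, hu.compl, .univ]
  · refine eq_empty_of_forall_notMem fun x hx => ?_
    have hxi := mem_iInter.1 hx i
    have hxj := mem_iInter.1 hx j
    simp only [if_neg hij.symm] at hxi hxj
    exact hxj hxi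

theorem MeasurablySeparableFamily.of_subset_iUnion {κ : Type*} [Countable κ] {s : ι → Set α}
    {t : κ → ι → Set α} (ht : ∀ n, MeasurablySeparableFamily (t n)) {K : ι}
    (hK : s K ⊆ ⋃ n, t n K) (hs : ∀ n k, k ≠ K → s k ⊆ t n k) :
    MeasurablySeparableFamily s := by
  classical
  choose u htu hu hempty using ht
  refine ⟨fun k => if k = K then ⋃ n, u n K else ⋂ n, u n k, fun k => ?_, fun k => ?_, ?_⟩
  · dsimp only
    split_ifs with hk
    · exact hk ▸ hK.trans (iUnion_mono fun n => htu n K)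
    · exact subset_iInter fun n => (hs n k hk).trans (htu n k)
  · dsimp only
    split_ifs
    exacts [.iUnion fun n => hu n K, .iInter fun n => hu n k]
  · refine eq_empty_of_forall_notMem fun x hx => ?_
    have hxK := mem_iInter.1 hx K
    simp only at hxK
    obtain ⟨n, hn⟩ := mem_iUnion.1 hxK
    suffices x ∈ ⋂ k, u n k by simp [hempty n] at this
    refine mem_iInter.2 fun k => ?_
    by_cases hk : k = K
    · exact hk ▸ hn
    · have hxk := mem_iInter.1 hx k
      simp only [if_neg hk] at hxk
      exact mem_iInter.1 hxk n

end Separation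

namespace PiNat

variable {E : ℕ → Type*}

theorem exists_forall_cylinder_of_refine {P : Set (∀ n, E n) → Prop} {z₀ : ∀ n, E n}
    (h₀ : P (cylinder z₀ 0))
    (hP : ∀ z n, P (cylinder z n) → ∃ i, P (cylinder (update z n i) (n + 1))) :
    ∃ z, ∀ n, P (cylinder z n) := by
  classical
  have hP' : ∀ z n, ∃ i, P (cylinder z n) → P (cylinder (update z n i) (n + 1)) := by
    intro z n
    by_cases h : P (cylinder z n)
    · exact (hP z n h).imp fun _ hi _ => hi
    · exact ⟨z₀ n, fun h' => absurd h' h⟩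
  choose c hc using hP'
  let w : ℕ → ∀ n, E n := fun n => Nat.rec z₀ (fun n wn => update wn n (c wn n)) n
  have hw : ∀ n, P (cylinder (w n) n) := fun n => by
    induction n with
    | zero => exact h₀
    | succ n ih => exact hc (w n) n ih
  have stable : ∀ n, ∀ m < n, w n m = w (m + 1) m := by
    intro n
    induction n with
    | zero => intro m hm; omega
    | succ n ih =>
      intro m hm
      rcases Nat.lt_succ_iff_lt_or_eq.1 hm with hm | rfl
      · rw [← ih m hm]
        exact update_of_ne (Nat.ne_of_lt hm) _ _
      · rfl
  refine ⟨fun m => w (m + 1) m, fun n => ?_⟩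
  convert hw n using 1
  rw [← mem_cylinder_iff_eq, mem_cylinder_iff]
  exact fun m hm => (stable n m hm).symm

theorem exists_image_cylinder_subset {β : Type*} [∀ n, TopologicalSpace (E n)]
    [∀ n, DiscreteTopology (E n)] [TopologicalSpace β] {g : (∀ n, E n) → β} {z : ∀ n, E n}
    (hg : ContinuousAt g z) {u : Set β} (hu : u ∈ nhds (g z)) :
    ∃ n, g '' cylinder z n ⊆ u := by
  obtain ⟨_, ⟨x, n, rfl⟩, hz, hsub⟩ :=
    (isTopologicalBasis_cylinders E).mem_nhds_iff.1 (hg.preimage_mem_nhds hu)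
  exact ⟨n, image_subset_iff.2 (mem_cylinder_iff_eq.1 hz ▸ hsub)⟩

end PiNat

section Novikov

open PiNat

variable {α : Type*} [TopologicalSpace α] [T2Space α] [MeasurableSpace α]
  [OpensMeasurableSpace α]

theorem measurablySeparableFamily_range {f : ℕ → (ℕ → ℕ) → α}
    (hf : ∀ k, Continuous (f k)) (h : ⋂ k, range (f k) = ∅) :
    MeasurablySeparableFamily fun k => range (f k) := by
  -- Code the whole family of parameters by one `z : ℕ → ℕ`, the `k`-th one being read off the
  -- coordinates `Nat.pair k m`: the `n`-th refinement step of a cylinder then refines only the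
  -- parameter of index `(Nat.unpair n).1`, and each parameter is refined infinitely often.
  set g : ℕ → (ℕ → ℕ) → α := fun k z => f k fun m => z (Nat.pair k m)
  have hg : ∀ k, Continuous (g k) := fun k =>
    (hf k).comp (continuous_pi fun m => continuous_apply _)
  have image_g : ∀ k, g k '' univ = range (f k) := fun k => by
    rw [image_univ]
    refine (range_comp_subset_range _ _).antisymm ?_
    rintro _ ⟨y, rfl⟩
    exact ⟨fun n => y (Nat.unpair n).2, by simp⟩
  by_contra hsep
  have refine_step : ∀ z n, ¬MeasurablySeparableFamily (fun k => g k '' cylinder z n) →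
      ∃ i, ¬MeasurablySeparableFamily (fun k => g k '' cylinder (update z n i) (n + 1)) := by
    intro z n
    contrapose!
    intro hsep
    refine .of_subset_iUnion hsep (K := (Nat.unpair n).1) ?_ ?_
    · rw [← iUnion_cylinder_update z n, image_iUnion]
    · rintro i k hk _ ⟨w, hw, rfl⟩
      refine ⟨update w n i, ?_, congrArg (f k) (funext fun m => update_of_ne ?_ _ _)⟩
      · refine mem_cylinder_iff.2 fun j hj => ?_
        rcases Nat.lt_succ_iff_lt_or_eq.1 hj with hj | rfl
        · simp [update_of_ne hj.ne, mem_cylinder_iff.1 hw j hj]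
        · simp
      · rintro rfl
        simp at hk
  obtain ⟨z, hz⟩ := exists_forall_cylinder_of_refine
    (P := fun C => ¬MeasurablySeparableFamily fun k => g k '' C) (z₀ := fun _ => 0)
    (by simpa only [cylinder_zero, image_g]) refine_step
  obtain ⟨K₁, K₂, hne⟩ : ∃ K₁ K₂, g K₁ z ≠ g K₂ z := by
    by_contra! hall
    have : g 0 z ∈ ⋂ k, range (f k) := mem_iInter.2 fun k => hall 0 k ▸ ⟨_, rfl⟩
    simp [h] at this
  obtain ⟨u, v, hu, hv, hzu, hzv, huv⟩ := t2_separation hne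
  obtain ⟨n₁, hn₁⟩ := exists_image_cylinder_subset (hg K₁).continuousAt (hu.mem_nhds hzu)
  obtain ⟨n₂, hn₂⟩ := exists_image_cylinder_subset (hg K₂).continuousAt (hv.mem_nhds hzv)
  refine hz (max n₁ n₂) (.of_measurablySeparable (i := K₁) (j := K₂)
    (fun h => hne (h ▸ rfl)) ⟨u, ?_, ?_, hu.measurableSet⟩)
  · exact (image_mono (cylinder_anti _ (le_max_left _ _))).trans hn₁
  · exact huv.symm.mono_left ((image_mono (cylinder_anti _ (le_max_right _ _))).trans hn₂)

theorem measurablySeparableFamily_of_analyticSet {s : ℕ → Set α}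
    (hs : ∀ k, MeasureTheory.AnalyticSet (s k)) (h : ⋂ k, s k = ∅) :
    MeasurablySeparableFamily s := by
  simp_rw [MeasureTheory.AnalyticSet] at hs
  by_cases hne : ∀ k, (s k).Nonempty
  · choose f hf hfs using fun k => Or.resolve_left (hs k) (hne k).ne_empty
    obtain rfl : s = fun k => range (f k) := funext fun k => (hfs k).symm
    exact measurablySeparableFamily_range hf h
  · obtain ⟨K, hK⟩ := not_forall.1 hne
    exact .of_measurablySeparable (j := K + 1) K.succ_ne_self.symm
      ⟨∅, (not_nonempty_iff_eq_empty.1 hK).le, disjoint_empty _, .empty⟩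

end Novikov

section Invariant

open MeasureTheory

variable {X Y : Type*} [TopologicalSpace X] [PolishSpace X] [MeasurableSpace X] [BorelSpace X]
  [TopologicalSpace Y] [PolishSpace Y] [MeasurableSpace Y] [BorelSpace Y]

theorem SetRel.analyticSet_image {R : SetRel X Y} (hR : MeasurableSet R) {s : Set X}
    (hs : MeasurableSet s) : AnalyticSet (R.image s) := by
  have : R.image s = Prod.snd '' (R ∩ Prod.fst ⁻¹' s) := by
    ext y
    simp [and_comm]
  rw [this]
  exact (hR.inter (measurable_fst hs)).analyticSet.image_of_continuous continuous_snd

theorem SetRel.analyticSet_preimage {R : SetRel X Y} (hR : MeasurableSet R) {t : Set Y}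
    (ht : MeasurableSet t) : AnalyticSet (R.preimage t) :=
  R.image_inv t ▸ SetRel.analyticSet_image (measurable_swap hR) ht

variable {R : SetRel X X}

theorem exists_measurableSet_image_subset_between (hR : MeasurableSet R) {s c : Set X}
    (hs : AnalyticSet s) (hc : AnalyticSet cᶜ) (hsc : s ⊆ c) (hcR : R.image c ⊆ c) :
    ∃ u, MeasurableSet u ∧ R.image u ⊆ u ∧ s ⊆ u ∧ u ⊆ c := by
  have separate :
      ∀ t, AnalyticSet t → t ⊆ c → ∃ u, MeasurableSet u ∧ t ⊆ u ∧ u ⊆ c := by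
    intro t ht htc
    obtain ⟨u, htu, hdisj, hu⟩ := ht.measurablySeparable hc (disjoint_compl_right.mono_left htc)
    exact ⟨u, hu, htu, disjoint_compl_left_iff_subset.1 hdisj⟩
  -- Enlarge `s` by alternately saturating and separating from `cᶜ`; the union is invariant.
  obtain ⟨u₀, hu₀, hsu₀, hu₀c⟩ := separate s hs hsc
  have step : ∀ u : {u : Set X // MeasurableSet u ∧ u ⊆ c},
      ∃ v : {v : Set X // MeasurableSet v ∧ v ⊆ c}, R.image u.1 ⊆ v.1 := by
    rintro ⟨u, hu, huc⟩
    obtain ⟨v, hv, huv, hvc⟩ :=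
      separate _ (SetRel.analyticSet_image hR hu) ((SetRel.image_subset_image huc).trans hcR)
    exact ⟨⟨v, hv, hvc⟩, huv⟩
  choose next hnext using step
  let u : ℕ → {u : Set X // MeasurableSet u ∧ u ⊆ c} :=
    fun n => next^[n] ⟨u₀, hu₀, hu₀c⟩
  refine ⟨⋃ n, (u n).1, .iUnion fun n => (u n).2.1, ?_, subset_iUnion_of_subset 0 hsu₀,
    iUnion_subset fun n => (u n).2.2⟩
  rintro y ⟨x, hx, hxy⟩
  obtain ⟨n, hn⟩ := mem_iUnion.1 hx
  refine mem_iUnion.2 ⟨n + 1, ?_⟩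
  simp only [u, iterate_succ_apply']
  exact hnext _ ⟨x, hn, hxy⟩

theorem exists_invariant_measurableSet_between [R.IsRefl] [R.IsTrans] (hR : MeasurableSet R)
    {s t : Set X} (hs : AnalyticSet s) (hsR : R.image s ⊆ s) (ht : MeasurableSet t)
    (hst : s ⊆ t) : ∃ u, MeasurableSet u ∧ R.image u ⊆ u ∧ s ⊆ u ∧ u ⊆ t := by
  have hcore : (R.core t)ᶜ = R.preimage tᶜ := by
    ext x
    simp [and_comm]
  obtain ⟨u, hu, huR, hsu, huc⟩ := exists_measurableSet_image_subset_between hR hs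
    (hcore ▸ SetRel.analyticSet_preimage hR ht.compl)
    (SetRel.image_subset_iff.1 (hsR.trans hst))
    (fun z ⟨_, hy, hyz⟩ _ hzw => hy (R.trans hyz hzw))
  exact ⟨u, hu, huR, hsu, fun x hx => huc hx R.rfl⟩

theorem exists_invariant_measurableSet_superset_iInter_eq_empty [R.IsRefl] [R.IsTrans]
    (hR : MeasurableSet R) {s : ℕ → Set X} (hs : ∀ k, AnalyticSet (s k))
    (hsR : ∀ k, R.image (s k) ⊆ s k) (h : ⋂ k, s k = ∅) :
    ∃ u : ℕ → Set X, (∀ k, MeasurableSet (u k)) ∧ (∀ k, R.image (u k) ⊆ u k) ∧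
      (∀ k, s k ⊆ u k) ∧ ⋂ k, u k = ∅ := by
  obtain ⟨t, hst, ht, ht_empty⟩ := measurablySeparableFamily_of_analyticSet hs h
  choose u hu huR hsu hut using fun k =>
    exists_invariant_measurableSet_between hR (hs k) (hsR k) (ht k) (hst k)
  exact ⟨u, hu, huR, hsu, subset_empty_iff.1 (ht_empty ▸ iInter_mono hut)⟩

end Invariant

theorem FiniteBorelER.exists_measurable_invariant_ge {X : Type*} [MeasurableSpace X]
    [StandardBorelSpace X] {r : X → X → Prop} (hr : FiniteBorelER r) {g : X → ℕ}
    (hg : Measurable g) :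
    ∃ h : X → ℕ, Measurable h ∧ (∀ x y, r x y → h x = h y) ∧ g ≤ h := by
  let := upgradeStandardBorel X
  obtain ⟨hequiv, hR, hfin⟩ := hr
  set R : SetRel X X := {p | r p.1 p.2}
  have : R.IsRefl := ⟨hequiv.refl⟩
  have : R.IsTrans := ⟨fun _ _ _ => hequiv.trans⟩
  set s : ℕ → Set X := fun k => R.image {x | k ≤ g x}
  have hs_empty : ⋂ k, s k = ∅ := by
    refine eq_empty_of_forall_notMem fun x hx => ?_
    obtain ⟨b, hb⟩ := ((hfin x).image g).bddAbove
    obtain ⟨y, hy, hyx⟩ := mem_iInter.1 hx (b + 1)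
    have : g y ≤ b := hb ⟨y, hequiv.symm hyx, rfl⟩
    exact absurd hy (by simp only [mem_ofPred_eq]; omega)
  obtain ⟨u, hu, huR, hsu, hu_empty⟩ :=
    exists_invariant_measurableSet_superset_iInter_eq_empty hR
      (fun _ => SetRel.analyticSet_image hR (hg measurableSet_Ici))
      (fun _ z ⟨_, ⟨x, hx, hxy⟩, hyz⟩ => ⟨x, hx, R.trans hxy hyz⟩) hs_empty
  have hexit : ∀ x, ∃ k, x ∉ u k := fun x => by
    simpa using (eq_empty_iff_forall_notMem.1 hu_empty x)
  classical
  refine ⟨fun x => Nat.find (hexit x), measurable_find hexit fun k => (hu k).compl,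
    fun x y hxy => Nat.find_congr' fun {k} => ?_, fun x => ?_⟩
  · exact not_congr
      ⟨fun hx => huR k ⟨x, hx, hxy⟩, fun hy => huR k ⟨y, hy, hequiv.symm hxy⟩⟩
  · exact ((Nat.lt_find_iff _ _).2 fun k hk => not_not.2 (hsu k ⟨x, hk, R.rfl⟩)).le

theorem borelBounded_of_hyperfinite_general
    {X : Type*} [MeasurableSpace X] [StandardBorelSpace X]
    (E : X → X → Prop)
    (F : ℕ → X → X → Prop) (hF : ∀ n, FiniteBorelER (F n))
    (hmono : ∀ n x y, F n x y → F (n + 1) x y)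
    (hunion : ∀ x y, E x y ↔ ∃ n, F n x y) :
    ∀ φ : X → ℕ → ℕ, Measurable φ →
      ∃ ψ : X → ℕ → ℕ, Measurable ψ ∧ (∀ x y, E x y → EvEq (ψ x) (ψ y)) ∧
        ∀ x, EvLe (φ x) (ψ x) := by
  intro φ hφ
  choose h hh hinv hle using fun n =>
    (hF n).exists_measurable_invariant_ge ((measurable_pi_apply n).comp hφ)
  refine ⟨fun x n => h n x, measurable_pi_lambda _ hh, fun x y hxy => ?_,
    fun x => .of_forall fun n => hle n x⟩
  obtain ⟨n₀, hn₀⟩ := (hunion x y).1 hxy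
  exact eventually_atTop.2
    ⟨n₀, fun n hn => hinv n x y (Nat.le_induction hn₀ (fun n _ => hmono n x y) n hn)⟩

/-- Every hyperfinite Borel equivalence relation is Borel bounded: if the
countable Borel equivalence relation `E` on the standard Borel space `X` is the
increasing union of finite Borel equivalence relations `F n`, then for every
Borel `φ : X → ℕ^ℕ` there is a Borel homomorphism `ψ` from `E` to `=*`
eventually dominating `φ` pointwise. -/
theorem borelBounded_of_hyperfinite
    {X : Type*} [MeasurableSpace X] [StandardBorelSpace X]
    (E : X → X → Prop) (hEq : Equivalence E)
    (hBorel : MeasurableSet {p : X × X | E p.1 p.2})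
    (hCtble : ∀ x, {y | E x y}.Countable)
    (F : ℕ → X → X → Prop) (hF : ∀ n, FiniteBorelER (F n))
    (hmono : ∀ n x y, F n x y → F (n + 1) x y)
    (hunion : ∀ x y, E x y ↔ ∃ n, F n x y) :
    ∀ φ : X → ℕ → ℕ, Measurable φ →
      ∃ ψ : X → ℕ → ℕ, Measurable ψ ∧ (∀ x y, E x y → EvEq (ψ x) (ψ y)) ∧
        ∀ x, EvLe (φ x) (ψ x) :=
  borelBounded_of_hyperfinite_general E F hF hmono hunion
end

section
/- Let E and F be countable Borel equivalence relations on the same standard Borel space X with E ⊆ F, let 𝐀 be an invariant relation, and let Φ be a property of subsets of A₊. Suppose F is smooth over E, i.e. there is a Borel homomorphism f : X → X from F to E such that x E f(x) for all x ∈ X. If E is Borel non-(𝐀,Φ), then F is Borel non-(𝐀,Φ). -/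
open Filter

/-- An invariant relation `𝐀 = (A₋, A₊, A)`: `A₋` and `A₊` are Borel subsets of
`ℕ^ℕ` (with `2^ℕ = 𝒫(ℕ)` regarded as `{0,1}`-valued functions), and the
relation `A` respects eventual equality on both sides. -/
structure InvRelation where
  neg : Set (ℕ → ℕ)
  pos : Set (ℕ → ℕ)
  negBorel : MeasurableSet neg
  posBorel : MeasurableSet pos
  rel : (ℕ → ℕ) → (ℕ → ℕ) → Prop
  invariant : ∀ x x' y y', x ∈ neg → x' ∈ neg → y ∈ pos → y' ∈ pos →
    EvEq x x' → EvEq y y' → (rel x y ↔ rel x' y')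

/-- `E` is Borel non-`(𝐀,Φ)`: for every Borel homomorphism `φ : X → (A₊)^ℕ`
from `E` to `E_set(A₊)` such that each family `{φ(x)(n) : n ∈ ℕ}` has property
`Φ`, there is a Borel homomorphism `ψ : X → A₋` from `E` to `E₀(A₋)` with
`¬(ψ(x) A φ(x)(n))` for all `x` and `n`. -/
def BorelNonRel (A : InvRelation) (Φ : Set (ℕ → ℕ) → Prop)
    {X : Type*} [MeasurableSpace X] (E : X → X → Prop) : Prop :=
  ∀ φ : X → ℕ → ℕ → ℕ, Measurable φ → (∀ x n, φ x n ∈ A.pos) →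
    (∀ x y, E x y → Set.range (φ x) = Set.range (φ y)) →
    (∀ x, Φ (Set.range (φ x))) →
    ∃ ψ : X → ℕ → ℕ, Measurable ψ ∧ (∀ x, ψ x ∈ A.neg) ∧
      (∀ x y, E x y → EvEq (ψ x) (ψ y)) ∧ ∀ x n, ¬ A.rel (ψ x) (φ x n)

theorem BorelNonRel.of_retract {A : InvRelation} {Φ : Set (ℕ → ℕ) → Prop}
    {X Y : Type*} [MeasurableSpace X] [MeasurableSpace Y]
    {E : Y → Y → Prop} {F : X → X → Prop} (hE : BorelNonRel A Φ E)
    (f : X → Y) (hf : Measurable f) (hfhom : ∀ x x', F x x' → E (f x) (f x'))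
    (s : Y → X) (hs : Measurable s) (hshom : ∀ y y', E y y' → F (s y) (s y'))
    (hsf : ∀ x, F x (s (f x))) :
    BorelNonRel A Φ F := by
  intro φ hφ hpos hφhom hΦ
  have hrange : ∀ x, Set.range (φ x) = Set.range (φ (s (f x))) := fun x => hφhom _ _ (hsf x)
  obtain ⟨ψ, hψ, hneg, hψhom, hψrel⟩ :=
    hE (φ ∘ s) (hφ.comp hs) (fun y => hpos (s y))
      (fun y y' hyy' => hφhom _ _ (hshom _ _ hyy')) (fun y => hΦ (s y))
  refine ⟨ψ ∘ f, hψ.comp hf, fun x => hneg (f x), fun x x' hxx' => hψhom _ _ (hfhom _ _ hxx'),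
    fun x n => ?_⟩
  obtain ⟨m, hm⟩ : φ x n ∈ Set.range (φ (s (f x))) := hrange x ▸ Set.mem_range_self n
  rw [← hm]
  exact hψrel (f x) m

theorem borelNonRel_of_smoothOver_general
    {X : Type*} [MeasurableSpace X]
    (A : InvRelation) (Φ : Set (ℕ → ℕ) → Prop)
    (E F : X → X → Prop)
    (hsub : ∀ x y, E x y → F x y)
    (f : X → X) (hf : Measurable f)
    (hhom : ∀ x y, F x y → E (f x) (f y))
    (hfix : ∀ x, E x (f x))
    (hE : BorelNonRel A Φ E) :
    BorelNonRel A Φ F :=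
  hE.of_retract f hf hhom id measurable_id hsub fun x => hsub _ _ (hfix x)

/-- Suppose `E ⊆ F` are countable Borel equivalence relations on the same
standard Borel space and `F` is smooth over `E`, i.e. there is a Borel
homomorphism `f` from `F` to `E` with `x E f(x)` for all `x`. If `E` is Borel
non-`(𝐀,Φ)`, then so is `F`. -/
theorem borelNonRel_of_smoothOver
    {X : Type*} [MeasurableSpace X] [StandardBorelSpace X]
    (A : InvRelation) (Φ : Set (ℕ → ℕ) → Prop)
    (E F : X → X → Prop)
    (hEeq : Equivalence E) (hEBorel : MeasurableSet {p : X × X | E p.1 p.2})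
    (hECtble : ∀ x, {y | E x y}.Countable)
    (hFeq : Equivalence F) (hFBorel : MeasurableSet {p : X × X | F p.1 p.2})
    (hFCtble : ∀ x, {y | F x y}.Countable)
    (hsub : ∀ x y, E x y → F x y)
    (f : X → X) (hf : Measurable f)
    (hhom : ∀ x y, F x y → E (f x) (f y))
    (hfix : ∀ x, E x (f x))
    (hE : BorelNonRel A Φ E) :
    BorelNonRel A Φ F :=
  borelNonRel_of_smoothOver_general A Φ E F hsub f hf hhom hfix hE
end

section
/- If a countable Borel equivalence relation E on a standard Borel space X has property 𝖻, then E has property 𝗋 (Borel reapable). -/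
open Filter

/-- Eventual equality on `2^ℕ` (i.e. finite symmetric difference, `=*`). -/
def EvEqB (x y : ℕ → Bool) : Prop := ∀ᶠ n in Filter.atTop, x n = y n

/-- `x` is an infinite subset of `ℕ` (i.e. `x ∈ [ℕ]^ℕ`). -/
def IsInfSet (x : ℕ → Bool) : Prop := {n | x n = true}.Infinite

/-- Almost containment `x ⊆* y`: `x \ y` is finite. -/
def AlmostSubset (x y : ℕ → Bool) : Prop := {n | x n = true ∧ y n = false}.Finite

/-- The complement `ℕ \ x` of a subset of `ℕ`. -/
def complB (x : ℕ → Bool) : ℕ → Bool := fun n => !(x n)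

/-- `E` has property `𝖻`. -/
def PropertyB {X : Type*} [MeasurableSpace X] (E : X → X → Prop) : Prop :=
  ∀ φ : X → ℕ → ℕ → ℕ, Measurable φ →
    (∀ x y, E x y → Set.range (φ x) = Set.range (φ y)) →
    ∃ ψ : X → ℕ → ℕ, Measurable ψ ∧ (∀ x y, E x y → EvEq (ψ x) (ψ y)) ∧
      ∀ x n, EvLe (φ x n) (ψ x)

/-- `E` has property `𝗋` (Borel reapable): for every Borel homomorphism
`φ : X → ([ℕ]^ℕ)^ℕ` from `E` to `E_set`, there is a Borel homomorphism
`ψ : X → [ℕ]^ℕ` from `E` to `=*` such that `ψ(x)` splits each `φ(x)(n)`. -/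
def PropertyR {X : Type*} [MeasurableSpace X] (E : X → X → Prop) : Prop :=
  ∀ φ : X → ℕ → ℕ → Bool, Measurable φ → (∀ x n, IsInfSet (φ x n)) →
    (∀ x y, E x y → Set.range (φ x) = Set.range (φ y)) →
    ∃ ψ : X → ℕ → Bool, Measurable ψ ∧ (∀ x, IsInfSet (ψ x)) ∧
      (∀ x y, E x y → EvEqB (ψ x) (ψ y)) ∧
      ∀ x n, {k | ψ x k = true ∧ φ x n k = true}.Infinite ∧
        {k | ψ x k = false ∧ φ x n k = true}.Infinite

/-!
Property 𝖻 applied to the next-element functions of the sets `φ x n` gives a strictly increasing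
`γ x` such that `φ x n` meets `(k, γ x k]` for all large `k`, with `γ x =* γ y` whenever `E x y`.
The orbits `j ↦ h^[2j] R` of all `h =* γ x` form a countable family depending only on the
`=*`-class of `γ x`; dominating it by 𝖻 gives a strictly increasing `U x` whose blocks
`[U j, U (j + 1))` infinitely often contain `γ (γ (U j))`, since otherwise `U` would be outgrown
by such an orbit. The reaping set is the union of the initial segments `[U j, γ (U j)]` of the
blocks: in a block as above, `φ x n` has an element in `(U j, γ (U j)]` and one in
`(γ (U j), γ (γ (U j))]`.
-/

section NextElement

noncomputable def nextElem (A : ℕ → Bool) (k : ℕ) : ℕ := sInf {a | k < a ∧ A a = true}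

variable {A : ℕ → Bool}

lemma IsInfSet.exists_gt (hA : IsInfSet A) (k : ℕ) : ∃ a, k < a ∧ A a = true :=
  let ⟨a, ha, hka⟩ := Set.Infinite.exists_gt hA k; ⟨a, hka, ha⟩

lemma nextElem_spec (hA : IsInfSet A) (k : ℕ) : k < nextElem A k ∧ A (nextElem A k) = true :=
  Nat.sInf_mem (hA.exists_gt k)

lemma tendsto_nextElem (hA : IsInfSet A) : Tendsto (nextElem A) atTop atTop :=
  tendsto_atTop_mono (fun k => (nextElem_spec hA k).1.le) tendsto_id

end NextElement

section Majorant

def strictMajorant (b : ℕ → ℕ) (k : ℕ) : ℕ := partialSups b k + k + 1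

lemma strictMono_strictMajorant (b : ℕ → ℕ) : StrictMono (strictMajorant b) := fun i j hij => by
  have := (partialSups b).monotone hij.le
  unfold strictMajorant
  omega

lemma lt_strictMajorant (b : ℕ → ℕ) (k : ℕ) : k < strictMajorant b k := by
  unfold strictMajorant
  omega

lemma le_strictMajorant (b : ℕ → ℕ) (k : ℕ) : b k ≤ strictMajorant b k := by
  have := le_partialSups_of_le b le_rfl (i := k)
  unfold strictMajorant
  omega

variable {b b' : ℕ → ℕ}

lemma partialSups_eventually_le (h : b =ᶠ[atTop] b') (hb : Tendsto b atTop atTop) :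
    ∀ᶠ k in atTop, partialSups b k ≤ partialSups b' k := by
  obtain ⟨N, hN⟩ := eventually_atTop.1 h
  obtain ⟨K, hK⟩ := eventually_atTop.1 (tendsto_atTop.1 hb (partialSups b N))
  filter_upwards [eventually_ge_atTop (max N K)] with k hk
  refine partialSups_le _ _ _ fun j hj => ?_
  rcases le_or_gt N j with hNj | hjN
  · rw [hN j hNj]
    exact le_partialSups_of_le _ hj
  · calc b j ≤ partialSups b N := le_partialSups_of_le _ hjN.le
      _ ≤ b (max N K) := hK _ (le_max_right _ _)
      _ = b' (max N K) := hN _ (le_max_left _ _)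
      _ ≤ partialSups b' k := le_partialSups_of_le _ hk

-- Without unboundedness a change of finitely many values could shift the running maximum forever.
lemma strictMajorant_eventuallyEq (h : b =ᶠ[atTop] b') (hb : Tendsto b atTop atTop) :
    strictMajorant b =ᶠ[atTop] strictMajorant b' := by
  have hb' : Tendsto b' atTop atTop := hb.congr' h
  filter_upwards [partialSups_eventually_le h hb, partialSups_eventually_le h.symm hb']
    with k h₁ h₂
  simp only [strictMajorant, le_antisymm h₁ h₂]

end Majorant

section IterateFamily

def override (g : ℕ → ℕ) (l : List ℕ) (k : ℕ) : ℕ := l.getD k (g k)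

lemma range_override (g : ℕ → ℕ) : Set.range (override g) = {h | h =ᶠ[atTop] g} := by
  ext h
  constructor
  · rintro ⟨l, rfl⟩
    filter_upwards [eventually_ge_atTop l.length] with k hk
    exact List.getD_eq_default _ _ hk
  · intro hgh
    obtain ⟨N, hN⟩ := eventually_atTop.1 hgh
    refine ⟨(List.range N).map h, funext fun k => ?_⟩
    rcases lt_or_ge k N with hk | hk
    · simp [override, hk]
    · rw [override, List.getD_eq_default _ _ (by simpa using hk), hN k hk]

noncomputable def iterateFamily (g : ℕ → ℕ) (i : ℕ) (j : ℕ) : ℕ :=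
  (override g (Denumerable.ofNat (List ℕ × ℕ) i).1)^[2 * j] (Denumerable.ofNat (List ℕ × ℕ) i).2

lemma range_iterateFamily (g : ℕ → ℕ) :
    Set.range (iterateFamily g) =
      (fun p : (ℕ → ℕ) × ℕ => fun j => p.1^[2 * j] p.2) '' {h | h =ᶠ[atTop] g} ×ˢ Set.univ := by
  have hsurj : Function.Surjective (Denumerable.ofNat (List ℕ × ℕ)) :=
    fun p => ⟨Encodable.encode p, Denumerable.ofNat_encode p⟩
  rw [← range_override, ← Set.range_id, ← Set.range_prodMap, ← Set.range_comp,
    ← hsurj.range_comp]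
  rfl

lemma range_iterateFamily_congr {g g' : ℕ → ℕ} (h : g =ᶠ[atTop] g') :
    Set.range (iterateFamily g) = Set.range (iterateFamily g') := by
  have hclass : {f | f =ᶠ[atTop] g} = {f | f =ᶠ[atTop] g'} :=
    Set.ext fun f => ⟨fun hf => hf.trans h, fun hf => hf.trans h.symm⟩
  rw [range_iterateFamily, range_iterateFamily, hclass]

lemma iterateFamily_encode_nil (g : ℕ → ℕ) (R : ℕ) :
    iterateFamily g (Encodable.encode (([] : List ℕ), R)) = fun j => g^[2 * j] R := by
  unfold iterateFamily
  rw [Denumerable.ofNat_encode]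
  rfl

end IterateFamily

lemma frequently_iterate_lt {g u : ℕ → ℕ} (hg : StrictMono g)
    (hu : ∀ R, ∀ᶠ j in atTop, g^[2 * j] R ≤ u j) : ∃ᶠ j in atTop, g (g (u j)) < u (j + 1) := by
  by_contra hbad
  obtain ⟨J, hJ⟩ := eventually_atTop.1 (not_frequently.1 hbad)
  have horbit : ∀ t, u (J + t) ≤ (g^[2])^[t] (u J) := fun t =>
    (hg.monotone.iterate 2).seq_le_seq (x := fun t => u (J + t)) (y := fun t => _^[t] (u J)) t
      le_rfl (fun k _ => not_lt.1 (hJ (J + k) (by omega)))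
      fun k _ => (Function.iterate_succ_apply' _ _ _).ge
  obtain ⟨T, hT⟩ := eventually_atTop.1 (hu (u J + 1))
  have hexp := hg.monotone.monotone_iterate_of_le_map (hg.id_le (u J))
  have := calc g^[2 * (J + T)] (u J + 1) ≤ u (J + T) := hT _ (by omega)
    _ ≤ g^[2 * T] (u J) := by rw [Function.iterate_mul]; exact horbit T
    _ ≤ g^[2 * (J + T)] (u J) := hexp (by omega)
    _ < g^[2 * (J + T)] (u J + 1) := hg.iterate _ (Nat.lt_succ_self _)
  exact lt_irrefl _ this

section Reaper

/-- For increasing `u`, the index `j` of the block `[u j, u (j + 1))` containing `k`. -/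
noncomputable def blockIndex (u : ℕ → ℕ) (k : ℕ) : ℕ := sInf {j | k < u (j + 1)}

noncomputable def reaper (u g : ℕ → ℕ) (k : ℕ) : Bool := decide (k ≤ g (u (blockIndex u k)))

variable {u u' g g' : ℕ → ℕ}

lemma exists_lt_block (hu : StrictMono u) (k : ℕ) : ∃ j, k < u (j + 1) :=
  ⟨k, Nat.lt_of_lt_of_le k.lt_succ_self (hu.id_le _)⟩

lemma blockIndex_eq (hu : Monotone u) {j k : ℕ} (h₁ : u j ≤ k) (h₂ : k < u (j + 1)) :
    blockIndex u k = j := by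
  refine le_antisymm (Nat.sInf_le h₂) (not_lt.1 fun hlt => ?_)
  have : k < u (blockIndex u k + 1) := Nat.sInf_mem (s := {j | k < u (j + 1)}) ⟨j, h₂⟩
  have := hu (show blockIndex u k + 1 ≤ j by omega)
  omega

lemma blockIndex_spec (hu : StrictMono u) {k : ℕ} (hk : u 0 ≤ k) :
    u (blockIndex u k) ≤ k ∧ k < u (blockIndex u k + 1) := by
  refine ⟨?_, Nat.sInf_mem (s := {j | k < u (j + 1)}) (exists_lt_block hu k)⟩
  rcases h : blockIndex u k with _ | i
  · exact hk
  · have : i < blockIndex u k := by omega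
    exact not_lt.1 (Nat.notMem_of_lt_sInf (s := {j | k < u (j + 1)}) this)

lemma tendsto_blockIndex (hu : StrictMono u) : Tendsto (blockIndex u) atTop atTop := by
  refine tendsto_atTop.2 fun m => ?_
  filter_upwards [eventually_ge_atTop (u m)] with k hk
  refine not_lt.1 fun hlt => ?_
  have := hu.monotone (show blockIndex u k + 1 ≤ m by omega)
  have := (blockIndex_spec hu ((hu.monotone (Nat.zero_le m)).trans hk)).2
  omega

lemma blockIndex_eventuallyEq (hu : StrictMono u) (hu' : Monotone u') (h : u =ᶠ[atTop] u') :
    blockIndex u =ᶠ[atTop] blockIndex u' := by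
  obtain ⟨N, hN⟩ := eventually_atTop.1 h
  filter_upwards [eventually_ge_atTop (u 0),
    (tendsto_blockIndex hu).eventually (eventually_ge_atTop N)] with k hk hkN
  obtain ⟨h₁, h₂⟩ := blockIndex_spec hu hk
  rw [hN _ hkN] at h₁
  rw [hN _ (hkN.trans (Nat.le_succ _))] at h₂
  exact (blockIndex_eq hu' h₁ h₂).symm

lemma reaper_eq_of_mem_block (hu : Monotone u) {j k : ℕ} (h₁ : u j ≤ k) (h₂ : k < u (j + 1)) :
    reaper u g k = decide (k ≤ g (u j)) := by
  rw [reaper, blockIndex_eq hu h₁ h₂]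

lemma isInfSet_reaper (hu : StrictMono u) (hg : ∀ k, k ≤ g k) : IsInfSet (reaper u g) := by
  refine (Set.infinite_range_of_injective hu.injective).mono ?_
  rintro _ ⟨j, rfl⟩
  simpa [reaper_eq_of_mem_block hu.monotone le_rfl (hu j.lt_succ_self)] using hg (u j)

lemma reaper_eventuallyEq (hu : StrictMono u) (hu' : Monotone u') (huu : u =ᶠ[atTop] u')
    (hgg : g =ᶠ[atTop] g') : reaper u g =ᶠ[atTop] reaper u' g' := by
  have hb := tendsto_blockIndex hu
  filter_upwards [blockIndex_eventuallyEq hu hu' huu, hb.eventually huu,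
    (hu.tendsto_atTop.comp hb).eventually hgg] with k h₁ h₂ h₃
  simp only [reaper, ← h₁, ← h₂, Function.comp_apply] at h₃ ⊢
  rw [h₃]

lemma reaper_splits {A : ℕ → Bool} (hu : StrictMono u) (hg : ∀ k, k < g k) (hA : IsInfSet A)
    (hnext : ∀ᶠ k in atTop, nextElem A k ≤ g k)
    (hgap : ∃ᶠ j in atTop, g (g (u j)) < u (j + 1)) :
    {k | reaper u g k = true ∧ A k = true}.Infinite ∧
      {k | reaper u g k = false ∧ A k = true}.Infinite := by
  have hgu : Tendsto (g ∘ u) atTop atTop :=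
    (tendsto_atTop_mono (fun k => (hg k).le) tendsto_id).comp hu.tendsto_atTop
  have hnext₁ : ∀ᶠ j in atTop, nextElem A (u j) ≤ g (u j) := hu.tendsto_atTop.eventually hnext
  have hnext₂ : ∀ᶠ j in atTop, nextElem A (g (u j)) ≤ g (g (u j)) := hgu.eventually hnext
  simp only [← Nat.frequently_atTop_iff_infinite]
  constructor
  · refine ((tendsto_nextElem hA).comp hu.tendsto_atTop).frequently ?_
    refine (hgap.and_eventually hnext₁).mono fun j ⟨hj, hle⟩ => ?_
    obtain ⟨hlt, hmem⟩ := nextElem_spec hA (u j)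
    have := hg (g (u j))
    refine ⟨?_, hmem⟩
    simp only [Function.comp_apply, reaper_eq_of_mem_block hu.monotone hlt.le (by omega), hle,
      decide_true]
  · refine ((tendsto_nextElem hA).comp hgu).frequently ?_
    refine (hgap.and_eventually hnext₂).mono fun j ⟨hj, hle⟩ => ?_
    obtain ⟨hlt, hmem⟩ := nextElem_spec hA (g (u j))
    have := hg (u j)
    refine ⟨?_, hmem⟩
    simp only [Function.comp_apply]
    rw [reaper_eq_of_mem_block (j := j) hu.monotone (by omega) (by omega)]
    exact decide_eq_false (by omega)

end Reaper

section Measurability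

variable {α : Type*} [MeasurableSpace α]

lemma Measurable.apply_nat {β : Type*} [MeasurableSpace β] {F : α → ℕ → β} {f : α → ℕ}
    (hF : Measurable F) (hf : Measurable f) : Measurable fun x => F x (f x) :=
  (measurable_from_prod_countable_left (f := fun p : α × ℕ => F p.1 p.2)
    fun n => (measurable_pi_apply n).comp hF).comp (measurable_id.prodMk hf)

lemma Measurable.iterate_apply {g : α → ℕ → ℕ} (hg : Measurable g) (n R : ℕ) :
    Measurable fun x => (g x)^[n] R := by
  induction n with
  | zero => exact measurable_const
  | succ n ih => simpa only [Function.iterate_succ_apply'] using hg.apply_nat ih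

lemma measurable_sInf_setOf {p : α → ℕ → Prop} (hex : ∀ x, ∃ n, p x n)
    (hp : ∀ n, MeasurableSet {x | p x n}) : Measurable fun x => sInf {n | p x n} := by
  classical
  convert measurable_find hex hp using 2 with x
  exact Nat.sInf_def (hex x)

lemma Measurable.nextElem {A : α → ℕ → Bool} (hA : Measurable A) (hinf : ∀ x, IsInfSet (A x)) :
    Measurable fun x => _root_.nextElem (A x) :=
  measurable_pi_lambda _ fun k => measurable_sInf_setOf (fun x => (hinf x).exists_gt k)
    fun a => (MeasurableSet.const (k < a)).inter
      (measurableSet_eq_fun ((measurable_pi_apply a).comp hA) measurable_const)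

lemma Measurable.strictMajorant {b : α → ℕ → ℕ} (hb : Measurable b) :
    Measurable fun x => _root_.strictMajorant (b x) := by
  refine measurable_pi_lambda _ fun k => ?_
  simp only [_root_.strictMajorant, partialSups_eq_sup'_range]
  exact ((Finset.measurable_range_sup'' fun j _ => (measurable_pi_apply j).comp hb).add_const _
    ).add_const _

lemma Measurable.iterateFamily {g : α → ℕ → ℕ} (hg : Measurable g) :
    Measurable fun x => _root_.iterateFamily (g x) := by
  refine measurable_pi_lambda _ fun i => measurable_pi_lambda _ fun j => ?_
  refine Measurable.iterate_apply (measurable_pi_lambda _ fun k => ?_) _ _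
  exact measurable_of_countable _ |>.comp ((measurable_pi_apply k).comp hg)

lemma Measurable.reaper {u g : α → ℕ → ℕ} (hu : Measurable u)
    (hu_mono : ∀ x, StrictMono (u x)) (hg : Measurable g) :
    Measurable fun x => _root_.reaper (u x) (g x) := by
  refine measurable_pi_lambda _ fun k => ?_
  have hblock : Measurable fun x => blockIndex (u x) k :=
    measurable_sInf_setOf (fun x => exists_lt_block (hu_mono x) k) fun j =>
      measurableSet_lt measurable_const ((measurable_pi_apply (j + 1)).comp hu)
  exact (measurable_of_countable fun n => decide (k ≤ n)).comp
    (hg.apply_nat (hu.apply_nat hblock))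

end Measurability

theorem propertyR_of_propertyB_general
    {X : Type*} [MeasurableSpace X]
    (E : X → X → Prop)
    (hB : PropertyB E) : PropertyR E := by
  intro φ hφ hinf hhom
  obtain ⟨β, hβ, hβhom, hβdom⟩ := hB (fun x n => nextElem (φ x n))
    (measurable_pi_lambda _ fun n => ((measurable_pi_apply n).comp hφ).nextElem (hinf · n))
    fun x y hxy => by
      simp only [← Function.comp_def nextElem, Set.range_comp, hhom x y hxy]
  have hβtop (x : X) : Tendsto (β x) atTop atTop :=
    tendsto_atTop_mono' _ (hβdom x 0) (tendsto_nextElem (hinf x 0))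
  set γ := fun x => strictMajorant (β x)
  have hγ (x : X) : StrictMono (γ x) := strictMono_strictMajorant _
  obtain ⟨c, hc, hchom, hcdom⟩ := hB (fun x => iterateFamily (γ x)) hβ.strictMajorant.iterateFamily
    fun x y hxy => range_iterateFamily_congr (strictMajorant_eventuallyEq (hβhom x y hxy) (hβtop x))
  have horbit (x : X) (R : ℕ) : ∀ᶠ j in atTop, (γ x)^[2 * j] R ≤ c x j := by
    simpa only [EvLe, iterateFamily_encode_nil] using hcdom x (Encodable.encode (([] : List ℕ), R))
  have hctop (x : X) : Tendsto (c x) atTop atTop := tendsto_atTop.2 fun R =>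
    (horbit x R).mono fun j h => (Function.id_le_iterate_of_id_le (hγ x).id_le _ R).trans h
  set U := fun x => strictMajorant (c x)
  have hU (x : X) : StrictMono (U x) := strictMono_strictMajorant _
  refine ⟨fun x => reaper (U x) (γ x), hc.strictMajorant.reaper hU hβ.strictMajorant,
    fun x => isInfSet_reaper (hU x) (hγ x).id_le,
    fun x y hxy => reaper_eventuallyEq (hU x) (hU y).monotone
      (strictMajorant_eventuallyEq (hchom x y hxy) (hctop x))
      (strictMajorant_eventuallyEq (hβhom x y hxy) (hβtop x)),
    fun x n => reaper_splits (hU x) (lt_strictMajorant _) (hinf x n) ?_ ?_⟩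
  · filter_upwards [hβdom x n] with k hk using hk.trans (le_strictMajorant _ k)
  · exact frequently_iterate_lt (hγ x) fun R =>
      (horbit x R).mono fun j h => h.trans (le_strictMajorant _ j)

/-- If a countable Borel equivalence relation on a standard Borel space has
property `𝖻`, then it has property `𝗋`. -/
theorem propertyR_of_propertyB
    {X : Type*} [MeasurableSpace X] [StandardBorelSpace X]
    (E : X → X → Prop) (hEq : Equivalence E)
    (hBorel : MeasurableSet {p : X × X | E p.1 p.2})
    (hCtble : ∀ x, {y | E x y}.Countable)
    (hB : PropertyB E) : PropertyR E :=
  propertyR_of_propertyB_general E hB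
end

section
/- There exists a Borel function λ : ℕ^ℕ → ℕ^ℕ such that: (1) λ is a homomorphism from =* to =*, i.e. f =* g implies λ(f) =* λ(g); (2) for every f, the sequence λ(f) is nondecreasing; and (3) for every f ∈ ℕ^ℕ and every j ∈ ℕ, the interval [λ(f)(j), λ(f)(j+1)) contains an interval of the form [n, f(n)), i.e. there exists n ∈ ℕ with λ(f)(j) ≤ n and f(n) ≤ λ(f)(j+1). -/
open Filter

/-!
Cut `ℕ` greedily: after a cut point `s` put the next one at `max (s + 1) (min_{n ≥ s} f n)`, so
that the block between them contains `[n, f n)` for a minimiser `n`. Take `λ(f)(j)` to be the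
`j`-th iterate of this step started at `j`. The step is monotone, which gives monotonicity of
`λ(f)`; it maps `[N, ∞)` into itself and only reads `f` there, so for `j ≥ N` the value `λ(f)(j)`
depends only on `f` restricted to `[N, ∞)`, which gives the `=*`-homomorphism property. Each step
is a countable infimum of coordinates, composed along a countable parameter, hence Borel.
-/

open Set

theorem Set.EqOn.iterate {α : Type*} {f g : α → α} {s : Set α} (h : EqOn f g s)
    (hf : MapsTo f s s) : ∀ n, EqOn f^[n] g^[n] s
  | 0 => fun _ _ => rfl
  | n + 1 => fun x hx => by
    rw [Function.iterate_succ_apply, Function.iterate_succ_apply, Set.EqOn.iterate h hf n (hf hx),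
      h hx]

theorem measurable_iterate_of_countable {α β : Type*} [MeasurableSpace α] [MeasurableSpace β]
    [Countable β] [MeasurableSingletonClass β] {φ : α → β → β}
    (hφ : ∀ b, Measurable fun a => φ a b) (k : ℕ) (b : β) :
    Measurable fun a => (φ a)^[k] b := by
  induction k with
  | zero => exact measurable_const
  | succ k ih =>
    simp only [Function.iterate_succ_apply']
    exact (measurable_from_prod_countable_left (f := fun p : α × β => φ p.1 p.2) hφ).comp
      (measurable_id.prodMk ih)

namespace BorelIntervalHom

noncomputable def tailMin (f : ℕ → ℕ) (s : ℕ) : ℕ := ⨅ n, f (s + n)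

theorem tailMin_le (f : ℕ → ℕ) {s n : ℕ} (h : s ≤ n) : tailMin f s ≤ f n := by
  obtain ⟨k, rfl⟩ := Nat.exists_eq_add_of_le h
  exact ciInf_le (OrderBot.bddBelow _) k

theorem exists_apply_eq_tailMin (f : ℕ → ℕ) (s : ℕ) : ∃ n, s ≤ n ∧ f n = tailMin f s := by
  obtain ⟨k, hk⟩ := ciInf_mem fun n => f (s + n)
  exact ⟨s + k, Nat.le_add_right s k, hk⟩

theorem tailMin_mono (f : ℕ → ℕ) : Monotone (tailMin f) := fun _ _ h =>
  le_ciInf fun _ => tailMin_le f (h.trans (Nat.le_add_right _ _))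

theorem tailMin_congr {f g : ℕ → ℕ} {N s : ℕ} (h : EqOn f g (Ici N)) (hs : N ≤ s) :
    tailMin f s = tailMin g s :=
  iInf_congr fun n => h (mem_Ici.2 (hs.trans (Nat.le_add_right s n)))

theorem measurable_tailMin (s : ℕ) : Measurable fun f : ℕ → ℕ => tailMin f s :=
  Measurable.iInf fun n => measurable_pi_apply (s + n)

noncomputable def nextCut (f : ℕ → ℕ) (s : ℕ) : ℕ := max (s + 1) (tailMin f s)

theorem lt_nextCut (f : ℕ → ℕ) (s : ℕ) : s < nextCut f s :=
  Nat.lt_of_succ_le (le_max_left _ _)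

theorem tailMin_le_nextCut (f : ℕ → ℕ) (s : ℕ) : tailMin f s ≤ nextCut f s :=
  le_max_right _ _

theorem nextCut_mono (f : ℕ → ℕ) : Monotone (nextCut f) := fun _ _ h =>
  max_le_max (Nat.succ_le_succ h) (tailMin_mono f h)

theorem mapsTo_nextCut (f : ℕ → ℕ) (N : ℕ) : MapsTo (nextCut f) (Ici N) (Ici N) :=
  fun _ hs => le_of_lt (lt_of_le_of_lt hs (lt_nextCut f _))

theorem nextCut_eqOn {f g : ℕ → ℕ} {N : ℕ} (h : EqOn f g (Ici N)) :
    EqOn (nextCut f) (nextCut g) (Ici N) := fun s hs => by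
  rw [nextCut, nextCut, tailMin_congr h hs]

theorem measurable_nextCut (s : ℕ) : Measurable fun f : ℕ → ℕ => nextCut f s :=
  measurable_const.max (measurable_tailMin s)

noncomputable def cutPoint (f : ℕ → ℕ) (j : ℕ) : ℕ := (nextCut f)^[j] j

theorem nextCut_cutPoint_le (f : ℕ → ℕ) (j : ℕ) :
    nextCut f (cutPoint f j) ≤ cutPoint f (j + 1) := by
  rw [cutPoint, ← Function.iterate_succ_apply' (nextCut f)]
  exact (nextCut_mono f).iterate (j + 1) (Nat.le_succ j)

theorem cutPoint_mono (f : ℕ → ℕ) : Monotone (cutPoint f) :=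
  monotone_nat_of_le_succ fun j => (lt_nextCut f _).le.trans (nextCut_cutPoint_le f j)

theorem exists_interval_between_cutPoints (f : ℕ → ℕ) (j : ℕ) :
    ∃ n, cutPoint f j ≤ n ∧ f n ≤ cutPoint f (j + 1) := by
  obtain ⟨n, hn, hfn⟩ := exists_apply_eq_tailMin f (cutPoint f j)
  exact ⟨n, hn, hfn.trans_le ((tailMin_le_nextCut f _).trans (nextCut_cutPoint_le f j))⟩

theorem measurable_cutPoint : Measurable cutPoint :=
  measurable_pi_lambda _ fun j => measurable_iterate_of_countable measurable_nextCut j j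

theorem cutPoint_evEq {f g : ℕ → ℕ} (h : EvEq f g) : EvEq (cutPoint f) (cutPoint g) := by
  obtain ⟨N, hN⟩ := eventually_atTop.1 h
  exact eventually_atTop.2 ⟨N, fun j hj => (nextCut_eqOn hN).iterate (mapsTo_nextCut f N) j hj⟩

end BorelIntervalHom

/-- There is a Borel `λ : ℕ^ℕ → ℕ^ℕ` which is a homomorphism from `=*` to `=*`,
takes nondecreasing values, and such that every interval
`[λ(f)(j), λ(f)(j+1))` contains an interval of the form `[n, f(n))`, i.e.
there is `n` with `λ(f)(j) ≤ n` and `f(n) ≤ λ(f)(j+1)`. -/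
theorem exists_borel_interval_homomorphism :
    ∃ lam : (ℕ → ℕ) → ℕ → ℕ, Measurable lam ∧
      (∀ f g, EvEq f g → EvEq (lam f) (lam g)) ∧
      (∀ f, Monotone (lam f)) ∧
      (∀ f j, ∃ n, lam f j ≤ n ∧ f n ≤ lam f (j + 1)) :=
  ⟨BorelIntervalHom.cutPoint, BorelIntervalHom.measurable_cutPoint,
    fun _ _ => BorelIntervalHom.cutPoint_evEq, BorelIntervalHom.cutPoint_mono,
    BorelIntervalHom.exists_interval_between_cutPoints⟩
end

section
/- If a countable Borel equivalence relation E on a standard Borel space X has property 𝗋 (Borel reapable), then E has property 𝗂 (Borel non-maximal-independent). -/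
open Filter

/-- A family of infinite subsets of `ℕ` is independent if for any two disjoint
finite subfamilies `s`, `t`, the set of `k` lying in every member of `s` and in
the complement of every member of `t` is infinite. -/
def IndepFam (F : Set (ℕ → Bool)) : Prop :=
  ∀ s t : Finset (ℕ → Bool), ↑s ⊆ F → ↑t ⊆ F → Disjoint s t →
    {k | (∀ A ∈ s, A k = true) ∧ ∀ B ∈ t, B k = false}.Infinite

/-- `E` has property `𝗂` (Borel non-maximal-independent). -/
def PropertyI {X : Type*} [MeasurableSpace X] (E : X → X → Prop) : Prop :=
  ∀ φ : X → ℕ → ℕ → Bool, Measurable φ → (∀ x n, IsInfSet (φ x n)) →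
    (∀ x y, E x y → Set.range (φ x) = Set.range (φ y)) →
    (∀ x, IndepFam (Set.range (φ x))) →
    ∃ ψ : X → ℕ → Bool, Measurable ψ ∧ (∀ x, IsInfSet (ψ x)) ∧
      (∀ x y, E x y → EvEqB (ψ x) (ψ y)) ∧
      ∀ x, IndepFam (insert (ψ x) (Set.range (φ x))) ∧ ψ x ∉ Set.range (φ x)

/-!
Let `Φ x` enumerate, in a Borel way, the infinite cells `⋂ S ∩ ⋂ {ℕ \ B | B ∈ T}` of the
independent family `φ x` (`S`, `T` finite subfamilies). Since the set of cells only depends on the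
set `{φ x n}`, `Φ` is again a homomorphism to `E_set`, and property `𝗋` yields `ψ` splitting every
cell of every `φ x`. A set that splits all cells of an independent family can be added to it
keeping it independent, and it is not a member of the family, since it splits each member.
-/

def cell (S T : Finset (ℕ → Bool)) : ℕ → Bool :=
  fun k => decide ((∀ A ∈ S, A k = true) ∧ ∀ B ∈ T, B k = false)

def Splits (a c : ℕ → Bool) : Prop :=
  {k | a k = true ∧ c k = true}.Infinite ∧ {k | a k = false ∧ c k = true}.Infinite

def infiniteCells (F : Set (ℕ → Bool)) : Set (ℕ → Bool) :=
  {c | IsInfSet c ∧ ∃ S T : Finset (ℕ → Bool), ↑S ⊆ F ∧ ↑T ⊆ F ∧ c = cell S T}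

section Cell

variable {S T : Finset (ℕ → Bool)} {a : ℕ → Bool}

lemma cell_eq_true_iff {k : ℕ} :
    cell S T k = true ↔ (∀ A ∈ S, A k = true) ∧ ∀ B ∈ T, B k = false :=
  decide_eq_true_iff

lemma cell_singleton_empty (a : ℕ → Bool) : cell {a} ∅ = a := by
  ext k
  cases h : a k <;> simp [cell, h]

lemma setOf_cell_insert_left [DecidableEq (ℕ → Bool)] :
    {k | cell (insert a S) T k = true} = {k | a k = true ∧ cell S T k = true} := by
  ext k
  simp only [Set.mem_ofPred_eq, cell_eq_true_iff, Finset.forall_mem_insert, and_assoc]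

lemma setOf_cell_insert_right [DecidableEq (ℕ → Bool)] :
    {k | cell S (insert a T) k = true} = {k | a k = false ∧ cell S T k = true} := by
  ext k
  simp only [Set.mem_ofPred_eq, cell_eq_true_iff, Finset.forall_mem_insert]
  tauto

end Cell

lemma indepFam_iff_isInfSet_cell {F : Set (ℕ → Bool)} :
    IndepFam F ↔ ∀ S T : Finset (ℕ → Bool), ↑S ⊆ F → ↑T ⊆ F → Disjoint S T →
      IsInfSet (cell S T) := by
  simp only [IndepFam, IsInfSet, cell_eq_true_iff]

namespace IndepFam

variable {F : Set (ℕ → Bool)} {a : ℕ → Bool}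

lemma cell_mem_infiniteCells (hF : IndepFam F) {S T : Finset (ℕ → Bool)} (hS : ↑S ⊆ F)
    (hT : ↑T ⊆ F) (hST : Disjoint S T) : cell S T ∈ infiniteCells F :=
  ⟨indepFam_iff_isInfSet_cell.1 hF S T hS hT hST, S, T, hS, hT, rfl⟩

lemma notMem_of_splits (hF : IndepFam F) (ha : ∀ c ∈ infiniteCells F, Splits a c) :
    a ∉ F := by
  intro haF
  have hcell : a ∈ infiniteCells F := by
    simpa only [cell_singleton_empty] using hF.cell_mem_infiniteCells (S := {a}) (T := ∅)
      (by simpa using haF) (by simp) (Finset.disjoint_empty_right _)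
  exact (ha a hcell).2 <| Set.finite_empty.subset fun k ⟨h₁, h₂⟩ =>
    Bool.false_ne_true (h₁.symm.trans h₂)

lemma insert_of_splits (hF : IndepFam F) (ha : ∀ c ∈ infiniteCells F, Splits a c) :
    IndepFam (insert a F) := by
  classical
  rw [indepFam_iff_isInfSet_cell]
  intro S T hS hT hST
  have hS' : ↑(S.erase a) ⊆ F := by
    rwa [Finset.coe_erase, Set.sdiff_singleton_subset_iff]
  have hT' : ↑(T.erase a) ⊆ F := by
    rwa [Finset.coe_erase, Set.sdiff_singleton_subset_iff]
  by_cases haS : a ∈ S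
  · have haT : a ∉ T := Finset.disjoint_left.mp hST haS
    rw [← Finset.insert_erase haS, IsInfSet, setOf_cell_insert_left]
    exact (ha _ (hF.cell_mem_infiniteCells hS' ((Set.subset_insert_iff_of_notMem
      (by simpa using haT)).1 hT) (hST.mono_left (Finset.erase_subset a S)))).1
  by_cases haT : a ∈ T
  · rw [← Finset.insert_erase haT, IsInfSet, setOf_cell_insert_right]
    exact (ha _ (hF.cell_mem_infiniteCells ((Set.subset_insert_iff_of_notMem
      (by simpa using haS)).1 hS) hT' (hST.mono_right (Finset.erase_subset a T)))).2
  exact indepFam_iff_isInfSet_cell.1 hF S T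
    ((Set.subset_insert_iff_of_notMem (by simpa using haS)).1 hS)
    ((Set.subset_insert_iff_of_notMem (by simpa using haT)).1 hT) hST

end IndepFam

lemma Finset.exists_image_eq_of_subset_range {α β : Type*} [DecidableEq β] {g : α → β}
    {S : Finset β} (hS : ↑S ⊆ Set.range g) : ∃ u : Finset α, u.image g = S := by
  rw [← Set.image_univ, Finset.subset_set_image_iff] at hS
  exact hS.imp fun _ => And.right

open Classical in
noncomputable def cellOfIdx (g : ℕ → ℕ → Bool) (p : Finset ℕ × Finset ℕ) : ℕ → Bool :=
  cell (p.1.image g) (p.2.image g)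

-- The fallback `g 0 = cell {g 0} ∅` is itself an infinite cell, so the range is exactly the
-- set of infinite cells.
open Classical in
noncomputable def cellEnum (g : ℕ → ℕ → Bool) (m : ℕ) : ℕ → Bool :=
  if IsInfSet (cellOfIdx g (Denumerable.ofNat _ m)) then cellOfIdx g (Denumerable.ofNat _ m)
  else g 0

lemma range_cellEnum {g : ℕ → ℕ → Bool} (hg : ∀ n, IsInfSet (g n)) :
    Set.range (cellEnum g) = infiniteCells (Set.range g) := by
  classical
  ext c
  constructor
  · rintro ⟨m, rfl⟩
    unfold cellEnum cellOfIdx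
    split_ifs with h
    · exact ⟨h, _, _, Finset.coe_image_subset_range, Finset.coe_image_subset_range, rfl⟩
    · exact ⟨hg 0, {g 0}, ∅, by simp, by simp, (cell_singleton_empty _).symm⟩
  · rintro ⟨hc, S, T, hS, hT, rfl⟩
    obtain ⟨u, rfl⟩ := Finset.exists_image_eq_of_subset_range hS
    obtain ⟨v, rfl⟩ := Finset.exists_image_eq_of_subset_range hT
    obtain ⟨m, hm⟩ := (Denumerable.eqv (Finset ℕ × Finset ℕ)).symm.surjective (u, v)
    change Denumerable.ofNat _ m = (u, v) at hm
    refine ⟨m, ?_⟩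
    rw [cellEnum, hm]
    exact if_pos hc

lemma isInfSet_cellEnum {g : ℕ → ℕ → Bool} (hg : ∀ n, IsInfSet (g n)) (m : ℕ) :
    IsInfSet (cellEnum g m) :=
  ((range_cellEnum hg).subset ⟨m, rfl⟩).1

section Measurability

variable {X : Type*} [MeasurableSpace X]

lemma measurableSet_setOf_isInfSet {f : X → ℕ → Bool} (hf : Measurable f) :
    MeasurableSet {x | IsInfSet (f x)} := by
  simp only [IsInfSet, ← Nat.frequently_atTop_iff_infinite, Filter.frequently_atTop]
  refine Measurable.setOf (Measurable.forall fun N => Measurable.exists fun n => ?_)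
  exact Measurable.and measurable_const ((measurable_pi_apply n).comp hf |>.eq_const true)

lemma measurable_cellOfIdx {φ : X → ℕ → ℕ → Bool} (hφ : Measurable φ) (p : Finset ℕ × Finset ℕ) :
    Measurable fun x => cellOfIdx (φ x) p := by
  refine measurable_pi_lambda _ fun k => measurable_to_bool ?_
  have hφ' (n : ℕ) (b : Bool) : Measurable fun x => φ x n k = b :=
    ((measurable_pi_apply k).comp ((measurable_pi_apply n).comp hφ)).eq_const b
  simp only [Set.preimage, Set.mem_singleton_iff, cellOfIdx, cell_eq_true_iff,
    Finset.forall_mem_image]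
  exact Measurable.setOf (.and (.forall fun i => .imp measurable_const (hφ' i true))
    (.forall fun j => .imp measurable_const (hφ' j false)))

lemma measurable_cellEnum {φ : X → ℕ → ℕ → Bool} (hφ : Measurable φ) :
    Measurable fun x => cellEnum (φ x) :=
  measurable_pi_lambda _ fun _ =>
    Measurable.ite (measurableSet_setOf_isInfSet (measurable_cellOfIdx hφ _))
      (measurable_cellOfIdx hφ _) ((measurable_pi_apply 0).comp hφ)

end Measurability

theorem propertyI_of_propertyR_general
    {X : Type*} [MeasurableSpace X]
    (E : X → X → Prop)
    (hR : PropertyR E) : PropertyI E := by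
  intro φ hφ hφinf hφE hφindep
  obtain ⟨ψ, hψ, hψinf, hψE, hψsplits⟩ := hR (fun x => cellEnum (φ x)) (measurable_cellEnum hφ)
    (fun x => isInfSet_cellEnum (hφinf x)) fun x y hxy => by
      rw [range_cellEnum (hφinf x), range_cellEnum (hφinf y), hφE x y hxy]
  refine ⟨ψ, hψ, hψinf, hψE, fun x => ?_⟩
  have hsplits : ∀ c ∈ infiniteCells (Set.range (φ x)), Splits (ψ x) c := by
    rw [← range_cellEnum (hφinf x)]
    rintro _ ⟨m, rfl⟩
    exact hψsplits x m
  exact ⟨(hφindep x).insert_of_splits hsplits, (hφindep x).notMem_of_splits hsplits⟩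

/-- If a countable Borel equivalence relation on a standard Borel space has
property `𝗋`, then it has property `𝗂`. -/
theorem propertyI_of_propertyR
    {X : Type*} [MeasurableSpace X] [StandardBorelSpace X]
    (E : X → X → Prop) (hEq : Equivalence E)
    (hBorel : MeasurableSet {p : X × X | E p.1 p.2})
    (hCtble : ∀ x, {y | E x y}.Countable)
    (hR : PropertyR E) : PropertyI E :=
  propertyI_of_propertyR_general E hR
end
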